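/- arXiv:0907.0371 — 6 statements merged into one kernel-verified Lean document; each statement's English description precedes it below -/
import Mathlib

section
/- The 5×5 integer symmetric matrix with rows (0,1,0,0,0),(1,0,1,0,0),(0,1,0,1,1),(0,0,1,0,1),(0,0,1,1,−1) and the 5×5 integer symmetric matrix with rows (1,1,0,0,0),(1,−1,1,0,0),(0,1,0,1,0),(0,0,1,0,1),(0,0,0,1,1) each have Mahler measure exactly equal to λ₀, the largest real root of Lehmer's polynomial z^10 + z^9 − z^7 − z^6 − z^5 − z^4 − z^3 + z + 1. -/
open Polynomial Matrix

noncomputable section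

/-- Lehmer's polynomial. -/
def lehmer : Polynomial ℤ :=
  X ^ 10 + X ^ 9 - X ^ 7 - X ^ 6 - X ^ 5 - X ^ 4 - X ^ 3 + X + 1

/-- Spectral radius of an integer symmetric matrix: the maximum of the absolute
values of the (real) roots of its characteristic polynomial. -/
def specRad {d : ℕ} (A : Matrix (Fin d) (Fin d) ℤ) : ℝ :=
  sSup {r : ℝ | ∃ x ∈ (A.charpoly.map (Int.castRingHom ℝ)).roots, |x| = r}

/-- The associated reciprocal polynomial `z^d * p(z + 1/z)` of a polynomial `p`
of degree (at most) `d`. -/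
def recipPoly (d : ℕ) (p : Polynomial ℤ) : Polynomial ℤ :=
  ∑ i ∈ Finset.range (d + 1), Polynomial.C (p.coeff i) * X ^ (d - i) * (X ^ 2 + 1) ^ i

/-- Mahler measure of an integer symmetric matrix: the Mahler measure of its
associated reciprocal polynomial. -/
def mahlerMeasure {d : ℕ} (A : Matrix (Fin d) (Fin d) ℤ) : ℝ :=
  ((((recipPoly d A.charpoly).map (Int.castRingHom ℂ)).roots).map
    (fun z => max 1 ‖z‖)).prod

/-- Equivalence of integer symmetric matrices: `B = ε • (Pᵀ * A * P)` for a sign `ε`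
and a signed permutation matrix `P`. -/
def MEquiv {m n : Type*} [Fintype m] [DecidableEq m] [Fintype n] [DecidableEq n]
    (A : Matrix m m ℤ) (B : Matrix n n ℤ) : Prop :=
  ∃ (ε : ℤ) (P : Matrix m n ℤ), (ε = 1 ∨ ε = -1) ∧ Pᵀ * P = 1 ∧ P * Pᵀ = 1 ∧
    B = ε • (Pᵀ * A * P)

/-- A matrix is indecomposable when its underlying graph is connected. -/
def Indecomposable {m : Type*} [Fintype m] (A : Matrix m m ℤ) : Prop :=
  (SimpleGraph.fromRel (fun i j => A i j ≠ 0)).Connected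

/-- The principal submatrix obtained by deleting row `i` and column `i`. -/
def deleteRC {d : ℕ} (A : Matrix (Fin d) (Fin d) ℤ) (i : Fin d) :
    Matrix (Fin (d - 1)) (Fin (d - 1)) ℤ :=
  A.submatrix
    (fun j => Fin.cast (Nat.succ_pred_eq_of_pos i.pos)
      ((Fin.cast (Nat.succ_pred_eq_of_pos i.pos).symm i).succAbove j))
    (fun j => Fin.cast (Nat.succ_pred_eq_of_pos i.pos)
      ((Fin.cast (Nat.succ_pred_eq_of_pos i.pos).symm i).succAbove j))

/-- Minimal noncyclotomic matrices. -/
def MinimalNoncyclotomic {d : ℕ} (A : Matrix (Fin d) (Fin d) ℤ) : Prop :=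
  2 < specRad A ∧ ∀ i : Fin d, specRad (deleteRC A i) ≤ 2

/-- The adjacency matrix of the starlike tree `T_{1,2,6}`: vertex `0` is the central
vertex, with arms `1`; `2-3`; `4-5-6-7-8-9`. -/
def T126 : Matrix (Fin 10) (Fin 10) ℤ :=
  Matrix.of fun i j =>
    if (i, j) ∈ ([(0,1),(0,2),(2,3),(0,4),(4,5),(5,6),(6,7),(7,8),(8,9)] :
          List (Fin 10 × Fin 10)) ∨
       (j, i) ∈ ([(0,1),(0,2),(2,3),(0,4),(4,5),(5,6),(6,7),(7,8),(8,9)] :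
          List (Fin 10 × Fin 10))
    then 1 else 0

def M5u : Matrix (Fin 5) (Fin 5) ℤ :=
  !![0,1,0,0,0; 1,0,1,0,0; 0,1,0,1,1; 0,0,1,0,1; 0,0,1,1,-1]

def M5N : Matrix (Fin 5) (Fin 5) ℤ :=
  !![1,1,0,0,0; 1,-1,1,0,0; 0,1,0,1,0; 0,0,1,0,1; 0,0,0,1,1]

/-- The induced submatrix (induced subgraph) on a finite set of indices. -/
def induce {V : Type*} (A : Matrix V V ℤ) (S : Finset V) :
    Matrix {x // x ∈ S} {x // x ∈ S} ℤ :=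
  A.submatrix Subtype.val Subtype.val

/-- The adjacency matrix of the toral tesselation `T_{2k}` (for `k ≥ 3`), with vertex set
`(ℤ/k) × {1,2}` realised as `Fin k × Fin 2`: column `i` is joined to column `i+1 (mod k)`,
with edge signs `+1` from `(i,0)` and `-1` from `(i,1)`. -/
def Tmat (k : ℕ) : Matrix (Fin k × Fin 2) (Fin k × Fin 2) ℤ :=
  Matrix.of fun u v =>
    (if ((u.1 : ℕ) + 1) % k = (v.1 : ℕ) then (if u.2 = 0 then 1 else -1) else 0) +
    (if ((v.1 : ℕ) + 1) % k = (u.1 : ℕ) then (if v.2 = 0 then 1 else -1) else 0)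

/-- The adjacency matrix of the cylindrical tesselation `C_{2k}^{±±}` (for `k ≥ 2`), with
vertex set `Fin k × Fin 2`; the last column carries charges `ch` and a vertical edge of
sign `es`.  `C_{2k}^{++} = Cmat k 1 (-1)` and `C_{2k}^{+-} = Cmat k (-1) 1`. -/
def Cmat (k : ℕ) (ch es : ℤ) : Matrix (Fin k × Fin 2) (Fin k × Fin 2) ℤ :=
  Matrix.of fun u v =>
    if u.1 = v.1 then
      (if (u.1 : ℕ) = 0 then 1
       else if (u.1 : ℕ) = k - 1 then (if u.2 = v.2 then ch else es)
       else 0)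
    else if (u.1 : ℕ) + 1 = (v.1 : ℕ) then (if u.2 = 0 then 1 else -1)
    else if (v.1 : ℕ) + 1 = (u.1 : ℕ) then (if v.2 = 0 then 1 else -1)
    else 0

/-- The underlying simple graph of a charged signed graph (adjacency matrix). -/
def graphOf {V : Type*} (A : Matrix V V ℤ) : SimpleGraph V :=
  SimpleGraph.fromRel (fun i j => A i j ≠ 0)

/-- `G` has a chordless path or chordless cycle with `n` vertices. -/
def HasChordless {V : Type*} (G : SimpleGraph V) (n : ℕ) : Prop :=
  (∃ f : Fin n → V, Function.Injective f ∧
      ∀ i j : Fin n, G.Adj (f i) (f j) ↔ ((i : ℕ) + 1 = (j : ℕ) ∨ (j : ℕ) + 1 = (i : ℕ))) ∨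
  (3 ≤ n ∧ ∃ f : Fin n → V, Function.Injective f ∧
      ∀ i j : Fin n, G.Adj (f i) (f j) ↔
        (((i : ℕ) + 1) % n = (j : ℕ) ∨ ((j : ℕ) + 1) % n = (i : ℕ)))

/-- The path rank of `G`: the maximal number of vertices of a chordless path or
chordless cycle. -/
def pathRank {V : Type*} [Fintype V] (G : SimpleGraph V) : ℕ :=
  sSup {n | HasChordless G n}

/-- A profile of a charged signed graph `A`, given by a surjection `c` onto the `k ≥ 3`
columns (`cyc` records whether the profile is cycling): each column consists of vertices
with equal charge, and two distinct vertices are adjacent iff they lie in consecutive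
columns or are charged vertices in a common column. -/
def IsProfile {V : Type*} (A : Matrix V V ℤ) (k : ℕ) (cyc : Bool) (c : V → Fin k) : Prop :=
  3 ≤ k ∧ Function.Surjective c ∧
  (∀ u v : V, c u = c v → A u u = A v v) ∧
  (∀ u v : V, u ≠ v →
    (A u v ≠ 0 ↔
      ((if cyc then (((c u : ℕ) + 1) % k = (c v : ℕ) ∨ ((c v : ℕ) + 1) % k = (c u : ℕ))
        else ((c u : ℕ) + 1 = (c v : ℕ) ∨ (c v : ℕ) + 1 = (c u : ℕ)))
       ∨ (c u = c v ∧ A u u ≠ 0))))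

/-!
Both characteristic polynomials have five distinct real roots, located by sign changes, and
all but one of them lie in `[-2, 2]`. Writing `χ = ∏ (x - λᵢ)`, the reciprocal polynomial is
`∏ (z² - λᵢ z + 1)`. For `|λᵢ| ≤ 2` the roots of `z² - λᵢ z + 1` lie on the unit circle, so only
the remaining quadratic contributes to the Mahler measure, and it contributes the modulus of
its root outside the unit disc. The reciprocal polynomials are `L(z)` and `L(-z)`, and since
`λ₀ > 1` is a root of `L`, that root is `λ₀` (resp. `-λ₀`).
-/

lemma X_sq_sub_C_mul_X_add_one_eq_mul {a z : ℂ} (hz : z ^ 2 - a * z + 1 = 0) :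
    (X ^ 2 - C a * X + 1 : ℂ[X]) = (X - C z) * (X - C z⁻¹) := by
  have hz0 : z ≠ 0 := by rintro rfl; norm_num at hz
  have ha : a = z + z⁻¹ := by field_simp; linear_combination -hz
  have hinv : C z * C z⁻¹ = (1 : ℂ[X]) := by rw [← C_mul, mul_inv_cancel₀ hz0, C_1]
  rw [ha, C_add]
  linear_combination -hinv

lemma mahlerMeasure_X_sq_sub_C_mul_X_add_one {a z : ℂ} (hz : z ^ 2 - a * z + 1 = 0)
    (h1 : 1 ≤ ‖z‖) : (X ^ 2 - C a * X + 1 : ℂ[X]).mahlerMeasure = ‖z‖ := by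
  rw [X_sq_sub_C_mul_X_add_one_eq_mul hz, mahlerMeasure_mul, mahlerMeasure_X_sub_C,
    mahlerMeasure_X_sub_C, norm_inv, max_eq_right h1, max_eq_left (inv_le_one_of_one_le₀ h1),
    mul_one]

lemma norm_eq_one_of_sq_sub_mul_add_one_eq_zero {a : ℝ} (ha : |a| ≤ 2) {z : ℂ}
    (hz : z ^ 2 - a * z + 1 = 0) : ‖z‖ = 1 := by
  have hre := congrArg Complex.re hz
  have him := congrArg Complex.im hz
  simp only [sq, Complex.sub_re, Complex.add_re, Complex.mul_re, Complex.ofReal_re,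
    Complex.ofReal_im, Complex.one_re, Complex.zero_re, Complex.sub_im, Complex.add_im,
    Complex.mul_im, Complex.one_im, Complex.zero_im] at hre him
  have ha4 : a ^ 2 ≤ 4 := by nlinarith [abs_le.mp ha]
  suffices z.re ^ 2 + z.im ^ 2 = 1 by
    rw [Complex.norm_eq_sqrt_sq_add_sq, this, Real.sqrt_one]
  have : z.im * (2 * z.re - a) = 0 := by linear_combination him
  rcases mul_eq_zero.mp this with him0 | hre0
  · rw [him0] at hre ⊢
    nlinarith [sq_nonneg (2 * z.re - a)]
  · linear_combination -hre + z.re * hre0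

lemma mahlerMeasure_X_sq_sub_C_mul_X_add_one_of_abs_le_two {a : ℝ} (ha : |a| ≤ 2) :
    (X ^ 2 - C (a : ℂ) * X + 1 : ℂ[X]).mahlerMeasure = 1 := by
  have hdeg : (X ^ 2 - C (a : ℂ) * X + 1 : ℂ[X]).degree = 2 := by compute_degree!
  obtain ⟨z, hz⟩ := Complex.exists_root (hdeg ▸ zero_lt_two)
  simp only [IsRoot, eval_add, eval_sub, eval_mul, eval_pow, eval_X, eval_C, eval_one] at hz
  have hnorm := norm_eq_one_of_sq_sub_mul_add_one_eq_zero ha hz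
  rw [mahlerMeasure_X_sq_sub_C_mul_X_add_one hz hnorm.ge, hnorm]

lemma mahlerMeasure_prod_X_sq_sub_C_mul_X_add_one {ι : Type*} [Fintype ι] (a : ι → ℝ) (j : ι)
    (ha : ∀ i ≠ j, |a i| ≤ 2) {z : ℂ} (hz : (∏ i, (X ^ 2 - C (a i : ℂ) * X + 1)).eval z = 0)
    (h1 : 1 < ‖z‖) : (∏ i, (X ^ 2 - C (a i : ℂ) * X + 1)).mahlerMeasure = ‖z‖ := by
  rw [eval_prod, Finset.prod_eq_zero_iff] at hz
  obtain ⟨i, -, hi⟩ := hz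
  simp only [eval_add, eval_sub, eval_mul, eval_pow, eval_X, eval_C, eval_one] at hi
  obtain rfl : i = j := by
    by_contra hij
    exact h1.ne' (norm_eq_one_of_sq_sub_mul_add_one_eq_zero (ha i hij) hi)
  rw [Finset.prod_eq_multiset_prod, prod_mahlerMeasure_eq_mahlerMeasure_prod, Multiset.map_map,
    ← Finset.prod_eq_multiset_prod, Finset.prod_eq_single i]
  · exact mahlerMeasure_X_sq_sub_C_mul_X_add_one hi h1.le
  · exact fun k _ hk => mahlerMeasure_X_sq_sub_C_mul_X_add_one_of_abs_le_two (ha k hk)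
  · simp

lemma eval_map_recipPoly {d : ℕ} {p : ℤ[X]} (hp : p.natDegree ≤ d) {z : ℂ} (hz : z ≠ 0) :
    ((recipPoly d p).map (Int.castRingHom ℂ)).eval z =
      z ^ d * (p.map (Int.castRingHom ℂ)).eval (z + z⁻¹) := by
  rw [eval_eq_sum_range' (n := d + 1) ((natDegree_map_le).trans_lt (Nat.lt_succ_of_le hp)),
    Finset.mul_sum]
  simp only [recipPoly, Polynomial.map_sum, Polynomial.map_mul, Polynomial.map_pow, map_C,
    map_X, Polynomial.map_add, Polynomial.map_one, eval_finsetSum, eval_mul, eval_pow, eval_C,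
    eval_X, eval_add, eval_one, coeff_map]
  refine Finset.sum_congr rfl fun i hi => ?_
  have hi : i ≤ d := Nat.lt_succ_iff.mp (Finset.mem_range.mp hi)
  have hzd : z ^ d = z ^ (d - i) * z ^ i := by rw [← pow_add, Nat.sub_add_cancel hi]
  have hz2 : z * (z + z⁻¹) = z ^ 2 + 1 := by field_simp
  rw [hzd, ← hz2, mul_pow]
  ring

lemma map_recipPoly_eq_prod {d : ℕ} {p : ℤ[X]} {a : Fin d → ℂ}
    (hp : p.map (Int.castRingHom ℂ) = ∏ i, (X - C (a i))) :
    (recipPoly d p).map (Int.castRingHom ℂ) = ∏ i, (X ^ 2 - C (a i) * X + 1) := by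
  have hdeg : p.natDegree ≤ d := by
    rw [← natDegree_map_eq_of_injective (Int.castRingHom ℂ).injective_int, hp,
      natDegree_prod_of_monic _ _ fun i _ => monic_X_sub_C (a i)]
    simp
  refine eq_of_infinite_eval_eq _ _ ((Set.finite_singleton 0).infinite_compl.mono ?_)
  intro z hz
  have hzd : z ^ d = ∏ _i : Fin d, z := by simp
  rw [Set.mem_ofPred_eq, eval_map_recipPoly hdeg hz, hp, eval_prod, eval_prod, hzd,
    ← Finset.prod_mul_distrib]
  refine Finset.prod_congr rfl fun i _ => ?_
  simp only [eval_sub, eval_add, eval_mul, eval_pow, eval_X, eval_C, eval_one]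
  field_simp [Set.mem_compl_singleton_iff.mp hz]
  ring

lemma exists_aeval_eq_zero_mem_Ioo_of_mul_neg {R : Type*} [CommSemiring R] [Algebra R ℝ]
    (p : R[X]) {a b : ℝ} (hab : a ≤ b) (h : aeval a p * aeval b p < 0) :
    ∃ x ∈ Set.Ioo a b, aeval x p = 0 := by
  have hcont : ContinuousOn (fun x : ℝ => aeval x p) (Set.Icc a b) :=
    (Polynomial.continuous_aeval p).continuousOn
  rcases mul_neg_iff.mp h with ⟨ha, hb⟩ | ⟨ha, hb⟩
  · exact intermediate_value_Ioo' hab hcont ⟨hb, ha⟩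
  · exact intermediate_value_Ioo hab hcont ⟨ha, hb⟩

lemma exists_strictMono_roots_of_alternating_signs {R : Type*} [CommSemiring R] [Algebra R ℝ]
    (p : R[X]) {d : ℕ} (t : Fin (d + 1) → ℝ) (ht : Monotone t)
    (hs : ∀ i : Fin d, aeval (t i.castSucc) p * aeval (t i.succ) p < 0) :
    ∃ a : Fin d → ℝ, StrictMono a ∧
      ∀ i, a i ∈ Set.Ioo (t i.castSucc) (t i.succ) ∧ aeval (a i) p = 0 := by
  choose a ha hroot using fun i : Fin d =>
    exists_aeval_eq_zero_mem_Ioo_of_mul_neg p (ht (Fin.castSucc_le_succ i)) (hs i)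
  refine ⟨a, fun i j hij => ?_, fun i => ⟨ha i, hroot i⟩⟩
  calc a i < t i.succ := (ha i).2
    _ ≤ t j.castSucc := ht (Fin.succ_le_castSucc_iff.mpr hij)
    _ < a j := (ha j).1

lemma eq_prod_X_sub_C_of_injective {K : Type*} [Field K] {p : K[X]} (hp : p.Monic) {d : ℕ}
    (hd : p.natDegree = d) {a : Fin d → K} (ha : Function.Injective a)
    (hroot : ∀ i, p.IsRoot (a i)) : p = ∏ i, (X - C (a i)) := by
  have hmonic : (∏ i, (X - C (a i))).Monic := monic_prod_of_monic _ _ fun i _ => monic_X_sub_C _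
  refine eq_of_monic_of_dvd_of_natDegree_le hmonic hp
    (Fintype.prod_dvd_of_coprime (pairwise_coprime_X_sub_C ha) fun i => dvd_iff_isRoot.mpr
      (hroot i)) ?_
  rw [natDegree_prod_of_monic _ _ fun i _ => monic_X_sub_C (a i), hd]
  simp

lemma eval_map_intCast_ofReal (p : ℤ[X]) (x : ℝ) :
    (p.map (Int.castRingHom ℂ)).eval (x : ℂ) = (aeval x p : ℂ) := by
  rw [← Complex.coe_algebraMap, ← aeval_algebraMap_apply, aeval_def, eval_map]
  rfl

lemma map_eq_prod_X_sub_C_of_alternating_signs {p : ℤ[X]} (hp : p.Monic) {d : ℕ}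
    (hd : p.natDegree = d) (t : Fin (d + 1) → ℝ) (ht : Monotone t)
    (hs : ∀ i : Fin d, aeval (t i.castSucc) p * aeval (t i.succ) p < 0) :
    ∃ a : Fin d → ℝ, (∀ i, a i ∈ Set.Ioo (t i.castSucc) (t i.succ)) ∧
      p.map (Int.castRingHom ℂ) = ∏ i, (X - C (a i : ℂ)) := by
  obtain ⟨a, hmono, ha⟩ := exists_strictMono_roots_of_alternating_signs p t ht hs
  refine ⟨a, fun i => (ha i).1, eq_prod_X_sub_C_of_injective (hp.map _)
    ((natDegree_map_eq_of_injective (Int.castRingHom ℂ).injective_int p).trans hd)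
    (Complex.ofReal_injective.comp hmono.injective) fun i => ?_⟩
  simp [IsRoot, eval_map_intCast_ofReal, (ha i).2]

theorem mahlerMeasure_eq_norm_of_charpoly_eq_prod {d : ℕ} (A : Matrix (Fin d) (Fin d) ℤ)
    (a : Fin d → ℝ) (j : Fin d) (hA : A.charpoly.map (Int.castRingHom ℂ) = ∏ i, (X - C (a i : ℂ)))
    (ha : ∀ i ≠ j, |a i| ≤ 2) {z : ℂ}
    (hz : ((recipPoly d A.charpoly).map (Int.castRingHom ℂ)).eval z = 0) (h1 : 1 < ‖z‖) :
    mahlerMeasure A = ‖z‖ := by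
  have hR := map_recipPoly_eq_prod hA
  have hmonic : (∏ i, (X ^ 2 - C (a i : ℂ) * X + 1)).Monic :=
    monic_prod_of_monic _ _ fun i _ => by monicity!
  rw [hR] at hz
  rw [_root_.mahlerMeasure, hR, ← mahlerMeasure_prod_X_sq_sub_C_mul_X_add_one a j ha hz h1,
    mahlerMeasure_eq_leadingCoeff_mul_prod_roots, hmonic.leadingCoeff, norm_one, one_mul]

lemma charpoly_M5u : M5u.charpoly = X ^ 5 + X ^ 4 - 5 * X ^ 3 - 5 * X ^ 2 + 4 * X + 3 := by
  have h : charmatrix M5u =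
      !![X, -1, 0, 0, 0; -1, X, -1, 0, 0; 0, -1, X, -1, -1; 0, 0, -1, X, -1;
        0, 0, -1, -1, X + 1] := by
    ext i j : 2
    fin_cases i <;> fin_cases j <;> simp [M5u]
  rw [Matrix.charpoly, h]
  simp [Matrix.det_succ_row_zero, Fin.sum_univ_succ, Matrix.submatrix_apply, Fin.succAbove]
  ring

lemma recipPoly_charpoly_M5u : recipPoly 5 M5u.charpoly = lehmer := by
  simp [charpoly_M5u, recipPoly, Finset.sum_range_succ, coeff_X, lehmer]
  ring

lemma charpoly_M5N : M5N.charpoly = X ^ 5 - X ^ 4 - 5 * X ^ 3 + 5 * X ^ 2 + 4 * X - 3 := by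
  have h : charmatrix M5N =
      !![X - 1, -1, 0, 0, 0; -1, X + 1, -1, 0, 0; 0, -1, X, -1, 0; 0, 0, -1, X, -1;
        0, 0, 0, -1, X - 1] := by
    ext i j : 2
    fin_cases i <;> fin_cases j <;> simp [M5N]
  rw [Matrix.charpoly, h]
  simp [Matrix.det_succ_row_zero, Fin.sum_univ_succ, Matrix.submatrix_apply, Fin.succAbove]
  ring

lemma recipPoly_charpoly_M5N : recipPoly 5 M5N.charpoly = lehmer.comp (-X) := by
  simp [charpoly_M5N, recipPoly, Finset.sum_range_succ, coeff_X, lehmer]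
  ring

lemma charpoly_M5u_map_eq_prod : ∃ a : Fin 5 → ℝ, (∀ i ≠ 4, |a i| ≤ 2) ∧
    M5u.charpoly.map (Int.castRingHom ℂ) = ∏ i, (X - C (a i : ℂ)) := by
  obtain ⟨a, ha, hprod⟩ := map_eq_prod_X_sub_C_of_alternating_signs (charpoly_monic M5u)
    (by rw [charpoly_natDegree_eq_dim, Fintype.card_fin]) ![-2, -3 / 2, -1, 0, 2, 3]
    (Fin.monotone_iff_le_succ.mpr fun i => by fin_cases i <;> simp <;> norm_num)
    (fun i => by fin_cases i <;> simp [charpoly_M5u, map_ofNat] <;> norm_num)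
  refine ⟨a, fun i hi => abs_le.mpr ?_, hprod⟩
  obtain ⟨hlo, hhi⟩ := ha i
  fin_cases i <;> simp at hi hlo hhi ⊢ <;> constructor <;> linarith

lemma charpoly_M5N_map_eq_prod : ∃ a : Fin 5 → ℝ, (∀ i ≠ 0, |a i| ≤ 2) ∧
    M5N.charpoly.map (Int.castRingHom ℂ) = ∏ i, (X - C (a i : ℂ)) := by
  obtain ⟨a, ha, hprod⟩ := map_eq_prod_X_sub_C_of_alternating_signs (charpoly_monic M5N)
    (by rw [charpoly_natDegree_eq_dim, Fintype.card_fin]) ![-3, -2, 0, 1, 3 / 2, 2]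
    (Fin.monotone_iff_le_succ.mpr fun i => by fin_cases i <;> simp <;> norm_num)
    (fun i => by fin_cases i <;> simp [charpoly_M5N, map_ofNat] <;> norm_num)
  refine ⟨a, fun i hi => abs_le.mpr ?_, hprod⟩
  obtain ⟨hlo, hhi⟩ := ha i
  fin_cases i <;> simp at hi hlo hhi ⊢ <;> constructor <;> linarith

lemma one_lt_of_isGreatest_roots_lehmer {lam0 : ℝ}
    (hlam0 : IsGreatest {x : ℝ | aeval x lehmer = 0} lam0) : 1 < lam0 := by
  obtain ⟨x, hx, hroot⟩ := exists_aeval_eq_zero_mem_Ioo_of_mul_neg lehmer one_le_two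
    (by norm_num [lehmer])
  exact hx.1.trans_le (hlam0.2 hroot)

/-- the charged signed graphs `5u` and `5N` have Mahler measure exactly
`λ₀`, the largest real root of Lehmer's polynomial. -/
theorem statement6 (lam0 : ℝ)
    (hlam0 : IsGreatest {x : ℝ | (Polynomial.aeval x) lehmer = 0} lam0) :
    mahlerMeasure M5u = lam0 ∧ mahlerMeasure M5N = lam0 := by
  have h1 : 1 < lam0 := one_lt_of_isGreatest_roots_lehmer hlam0
  have hnorm : ‖(lam0 : ℂ)‖ = lam0 := by simp [abs_of_pos (one_pos.trans h1)]
  have h1' : 1 < ‖(lam0 : ℂ)‖ := by rwa [hnorm]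
  have hroot : (lehmer.map (Int.castRingHom ℂ)).eval (lam0 : ℂ) = 0 := by
    rw [eval_map_intCast_ofReal, hlam0.1, Complex.ofReal_zero]
  obtain ⟨a, ha, hA⟩ := charpoly_M5u_map_eq_prod
  obtain ⟨b, hb, hB⟩ := charpoly_M5N_map_eq_prod
  constructor
  · rw [← hnorm]
    refine mahlerMeasure_eq_norm_of_charpoly_eq_prod M5u a 4 hA ha ?_ h1'
    rwa [recipPoly_charpoly_M5u]
  · rw [← hnorm, ← norm_neg]
    refine mahlerMeasure_eq_norm_of_charpoly_eq_prod M5N b 0 hB hb ?_ (by rwa [norm_neg])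
    rwa [recipPoly_charpoly_M5N, Polynomial.map_comp, eval_comp, Polynomial.map_neg, map_X,
      eval_neg, eval_X, neg_neg]

end
end

section
/- For all integers a and b: (i) if |a| ≥ 1 and |b| ≤ 2 then the 2×2 matrix with rows (2,a),(a,b) is minimal noncyclotomic and has Mahler measure greater than 1.722; (ii) if |a| ≥ 2 and |b| ≤ 1 then the 2×2 matrix with rows (1,a),(a,b) is minimal noncyclotomic and has Mahler measure greater than 1.722; (iii) if a ≥ 3 then the 2×2 matrix with rows (0,a),(a,0) is minimal noncyclotomic and has Mahler measure greater than 1.722. -/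
open Polynomial Matrix

noncomputable section

/-! For a `2 × 2` integer matrix with real eigenvalues `l₁, l₂` the reciprocal polynomial is
`(z² - l₁ z + 1)(z² - l₂ z + 1)`. Writing `l = z + z⁻¹`, the Mahler measure of `z² - l z + 1` is
`max |z| |z|⁻¹`, which exceeds `μ > 0` as soon as `|l| > μ + μ⁻¹`, by the triangle inequality.
The diagonal entries have absolute value at most `2`, so both `1 × 1` principal submatrices are
cyclotomic. In each family either the characteristic polynomial is negative at
`1.722 + 1.722⁻¹`, so one eigenvalue exceeds it, or the trace vanishes and both eigenvalues
`±√(c² + a²)` exceed `3/2 + 2/3` in absolute value, giving measure above `(3/2)² > 1.722`. -/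

def recipQuad (l : ℂ) : ℂ[X] := X ^ 2 - C l * X + 1

lemma recipQuad_monic (l : ℂ) : (recipQuad l).Monic := by
  unfold recipQuad; monicity!

lemma exists_add_inv_eq (l : ℂ) : ∃ z : ℂ, z ≠ 0 ∧ z + z⁻¹ = l := by
  obtain ⟨s, hs⟩ := IsAlgClosed.exists_pow_nat_eq (l ^ 2 - 4) two_pos
  have hmul : (l + s) / 2 * ((l - s) / 2) = 1 := by linear_combination (-1/4 : ℂ) * hs
  refine ⟨(l + s) / 2, left_ne_zero_of_mul_eq_one hmul, ?_⟩
  rw [inv_eq_of_mul_eq_one_right hmul]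
  ring

lemma recipQuad_add_inv {z : ℂ} (hz : z ≠ 0) :
    recipQuad (z + z⁻¹) = (X - C z) * (X - C z⁻¹) := by
  have h : C z * C z⁻¹ = (1 : ℂ[X]) := by rw [← C_mul, mul_inv_cancel₀ hz, C_1]
  rw [recipQuad, C_add]
  linear_combination -h

lemma max_one_mul_max_one_inv {r : ℝ} (hr : 0 < r) : max 1 r * max 1 r⁻¹ = max r r⁻¹ := by
  rcases le_total 1 r with h | h
  · have h' : r⁻¹ ≤ 1 := inv_le_one_of_one_le₀ h
    rw [max_eq_right h, max_eq_left h', max_eq_left (h'.trans h), mul_one]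
  · have h' : 1 ≤ r⁻¹ := (one_le_inv₀ hr).mpr h
    rw [max_eq_left h, max_eq_right h', max_eq_right (h.trans h'), one_mul]

lemma mahlerMeasure_recipQuad_add_inv {z : ℂ} (hz : z ≠ 0) :
    (recipQuad (z + z⁻¹)).mahlerMeasure = max ‖z‖ ‖z‖⁻¹ := by
  rw [recipQuad_add_inv hz, mahlerMeasure_mul, mahlerMeasure_X_sub_C, mahlerMeasure_X_sub_C,
    norm_inv, max_one_mul_max_one_inv (norm_pos_iff.mpr hz)]

lemma lt_max_inv_of_add_inv_lt {μ r : ℝ} (hμ : 0 < μ) (hr : 0 < r) (h : μ + μ⁻¹ < r + r⁻¹) :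
    μ < max r r⁻¹ := by
  by_contra! hle
  obtain ⟨hrμ, hr'μ⟩ := max_le_iff.mp hle
  have key : μ + μ⁻¹ - (r + r⁻¹) = (μ - r) * (μ - r⁻¹) / μ := by field_simp; ring
  have : 0 ≤ (μ - r) * (μ - r⁻¹) / μ :=
    div_nonneg (mul_nonneg (sub_nonneg.2 hrμ) (sub_nonneg.2 hr'μ)) hμ.le
  linarith

lemma one_le_mahlerMeasure_recipQuad (l : ℂ) : 1 ≤ (recipQuad l).mahlerMeasure :=
  one_le_mahlerMeasure_of_one_le_norm_leadingCoeff <| by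
    rw [(recipQuad_monic l).leadingCoeff, norm_one]

lemma lt_mahlerMeasure_recipQuad {l : ℂ} {μ : ℝ} (hμ : 0 < μ) (h : μ + μ⁻¹ < ‖l‖) :
    μ < (recipQuad l).mahlerMeasure := by
  obtain ⟨z, hz, rfl⟩ := exists_add_inv_eq l
  rw [mahlerMeasure_recipQuad_add_inv hz]
  refine lt_max_inv_of_add_inv_lt hμ (norm_pos_iff.mpr hz) (h.trans_le ?_)
  simpa using norm_add_le z z⁻¹

lemma recipPoly_two (t n : ℤ) :
    recipPoly 2 (X ^ 2 - C t * X + C n) =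
      X ^ 4 - C t * X ^ 3 + C (n + 2) * X ^ 2 - C t * X + 1 := by
  simp only [recipPoly, Finset.sum_range_succ, Finset.sum_range_zero, coeff_add, coeff_sub,
    coeff_X_pow, coeff_C_mul, coeff_X, coeff_C]
  simp only [C_add]
  norm_num
  ring

lemma specRad_fin_one (x : ℤ) : specRad !![x] = |(x : ℝ)| := by
  have h : (!![x].charpoly.map (Int.castRingHom ℝ)).roots = {(x : ℝ)} := by
    rw [Matrix.charpoly, Matrix.det_fin_one, charmatrix_apply_eq, Polynomial.map_sub, map_X,
      map_C, roots_X_sub_C]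
    simp
  rw [specRad, h]
  simp

section FinTwo

variable {M : Matrix (Fin 2) (Fin 2) ℤ} {l₁ l₂ : ℝ}

lemma charpoly_map_fin_two (h₁ : l₁ + l₂ = M.trace) (h₂ : l₁ * l₂ = M.det) :
    M.charpoly.map (Int.castRingHom ℝ) = (X - C l₁) * (X - C l₂) := by
  rw [charpoly_fin_two]
  simp only [Polynomial.map_add, Polynomial.map_sub, Polynomial.map_mul, Polynomial.map_pow,
    Polynomial.map_X, Polynomial.map_C, Int.coe_castRingHom, ← h₁, ← h₂, C_add, C_mul]
  ring

lemma specRad_fin_two (h₁ : l₁ + l₂ = M.trace) (h₂ : l₁ * l₂ = M.det) :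
    specRad M = max |l₁| |l₂| := by
  rw [specRad, charpoly_map_fin_two h₁ h₂,
    roots_mul (mul_ne_zero (X_sub_C_ne_zero l₁) (X_sub_C_ne_zero l₂)), roots_X_sub_C, roots_X_sub_C]
  have : {r : ℝ | ∃ y ∈ ({l₁} + {l₂} : Multiset ℝ), |y| = r} = {|l₁|, |l₂|} := by
    ext r; simp [eq_comm]
  rw [this, csSup_pair]

lemma mahlerMeasure_fin_two (h₁ : l₁ + l₂ = M.trace) (h₂ : l₁ * l₂ = M.det) :
    mahlerMeasure M = (recipQuad l₁).mahlerMeasure * (recipQuad l₂).mahlerMeasure := by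
  have hfac : (recipPoly 2 M.charpoly).map (Int.castRingHom ℂ) = recipQuad l₁ * recipQuad l₂ := by
    have h₁' : (l₁ : ℂ) + l₂ = M.trace := by
      rw [← Complex.ofReal_add, h₁, Complex.ofReal_intCast]
    have h₂' : (l₁ : ℂ) * l₂ = M.det := by
      rw [← Complex.ofReal_mul, h₂, Complex.ofReal_intCast]
    rw [charpoly_fin_two, recipPoly_two]
    simp only [recipQuad, Polynomial.map_add, Polynomial.map_sub, Polynomial.map_mul,
      Polynomial.map_pow, Polynomial.map_X, Polynomial.map_C, Polynomial.map_one,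
      Int.coe_castRingHom, map_ofNat, Polynomial.map_ofNat, ← h₁', ← h₂', C_add, C_mul]
    ring
  rw [_root_.mahlerMeasure, hfac, ← mahlerMeasure_mul,
    mahlerMeasure_eq_leadingCoeff_mul_prod_roots,
    ((recipQuad_monic _).mul (recipQuad_monic _)).leadingCoeff, norm_one, one_mul]

end FinTwo

lemma exists_eigenvalues_fin_two_symm (c a b : ℤ) :
    ∃ l₁ l₂ : ℝ, l₁ + l₂ = (!![c, a; a, b]).trace ∧ l₁ * l₂ = (!![c, a; a, b]).det := by
  set s := √((c - b) ^ 2 + 4 * a ^ 2 : ℝ)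
  have hs : s ^ 2 = (c - b) ^ 2 + 4 * a ^ 2 := Real.sq_sqrt (by positivity)
  refine ⟨(c + b + s) / 2, (c + b - s) / 2, ?_, ?_⟩
  · simp [Matrix.trace_fin_two]; ring
  · simp [Matrix.det_fin_two]; linear_combination (-1/4 : ℝ) * hs

lemma deleteRC_fin_two_zero (c a b : ℤ) : deleteRC !![c, a; a, b] 0 = !![b] := by
  ext i j; fin_cases i; fin_cases j; rfl

lemma deleteRC_fin_two_one (c a b : ℤ) : deleteRC !![c, a; a, b] 1 = !![c] := by
  ext i j; fin_cases i; fin_cases j; rfl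

lemma minimalNoncyclotomic_fin_two_symm {c a b : ℤ} {l₁ l₂ : ℝ} (hc : |c| ≤ 2) (hb : |b| ≤ 2)
    (h₁ : l₁ + l₂ = (!![c, a; a, b]).trace) (h₂ : l₁ * l₂ = (!![c, a; a, b]).det)
    (hl : 2 < |l₁|) : MinimalNoncyclotomic !![c, a; a, b] := by
  refine ⟨(specRad_fin_two h₁ h₂).symm ▸ hl.trans_le (le_max_left _ _), fun i => ?_⟩
  fin_cases i
  · change specRad (deleteRC _ 0) ≤ 2
    rw [deleteRC_fin_two_zero, specRad_fin_one, ← Int.cast_abs]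
    exact_mod_cast hb
  · change specRad (deleteRC _ 1) ≤ 2
    rw [deleteRC_fin_two_one, specRad_fin_one, ← Int.cast_abs]
    exact_mod_cast hc

lemma two_le_add_inv {μ : ℝ} (hμ : 0 < μ) : 2 ≤ μ + μ⁻¹ := by
  have : μ * μ⁻¹ = 1 := mul_inv_cancel₀ hμ.ne'
  nlinarith [sq_nonneg (μ - μ⁻¹), inv_pos.mpr hμ]

theorem minimalNoncyclotomic_and_lt_mahlerMeasure_of_lt_abs {c a b : ℤ} {l₁ l₂ μ : ℝ}
    (hc : |c| ≤ 2) (hb : |b| ≤ 2) (hμ : 0 < μ)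
    (h₁ : l₁ + l₂ = (!![c, a; a, b]).trace) (h₂ : l₁ * l₂ = (!![c, a; a, b]).det)
    (hl : μ + μ⁻¹ < |l₁|) :
    MinimalNoncyclotomic !![c, a; a, b] ∧ μ < mahlerMeasure !![c, a; a, b] := by
  have hl' : μ + μ⁻¹ < ‖(l₁ : ℂ)‖ := by rwa [Complex.norm_real, Real.norm_eq_abs]
  refine ⟨minimalNoncyclotomic_fin_two_symm hc hb h₁ h₂
    ((two_le_add_inv hμ).trans_lt hl), ?_⟩
  rw [mahlerMeasure_fin_two h₁ h₂]
  calc μ < (recipQuad l₁).mahlerMeasure := lt_mahlerMeasure_recipQuad hμ hl'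
    _ ≤ _ := le_mul_of_one_le_right (mahlerMeasure_nonneg _) (one_le_mahlerMeasure_recipQuad _)

theorem minimalNoncyclotomic_and_lt_mahlerMeasure_of_eval_neg {c a b : ℤ} {μ : ℝ}
    (hc : |c| ≤ 2) (hb : |b| ≤ 2) (hμ : 0 < μ)
    (h : (μ + μ⁻¹) ^ 2 - (c + b) * (μ + μ⁻¹) + (c * b - a * a) < 0) :
    MinimalNoncyclotomic !![c, a; a, b] ∧ μ < mahlerMeasure !![c, a; a, b] := by
  obtain ⟨l₁, l₂, h₁, h₂⟩ := exists_eigenvalues_fin_two_symm c a b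
  have hl : μ + μ⁻¹ < l₁ ∨ μ + μ⁻¹ < l₂ := by
    simp only [Matrix.trace_fin_two_of, Matrix.det_fin_two_of, Int.cast_add, Int.cast_sub,
      Int.cast_mul] at h₁ h₂
    have hprod : (μ + μ⁻¹ - l₁) * (μ + μ⁻¹ - l₂) < 0 := by
      linear_combination h - (μ + μ⁻¹) * h₁ + h₂
    by_contra! hle
    exact hprod.not_ge (mul_nonneg (sub_nonneg.2 hle.1) (sub_nonneg.2 hle.2))
  rcases hl with hl | hl
  · exact minimalNoncyclotomic_and_lt_mahlerMeasure_of_lt_abs hc hb hμ h₁ h₂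
      (hl.trans_le (le_abs_self _))
  · exact minimalNoncyclotomic_and_lt_mahlerMeasure_of_lt_abs hc hb hμ
      ((add_comm l₂ l₁).trans h₁) ((mul_comm l₂ l₁).trans h₂) (hl.trans_le (le_abs_self _))

theorem minimalNoncyclotomic_and_lt_mahlerMeasure_of_trace_eq_zero {c a : ℤ} {μ : ℝ}
    (hc : |c| ≤ 2) (hμ : 0 < μ) (h : (μ + μ⁻¹) ^ 2 < c ^ 2 + a ^ 2) :
    MinimalNoncyclotomic !![c, a; a, -c] ∧ μ ^ 2 < mahlerMeasure !![c, a; a, -c] := by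
  set l := √(c ^ 2 + a ^ 2 : ℝ)
  have hl2 : l ^ 2 = c ^ 2 + a ^ 2 := Real.sq_sqrt (by positivity)
  have h₁ : l + -l = (!![c, a; a, -c]).trace := by simp [Matrix.trace_fin_two]
  have h₂ : l * -l = (!![c, a; a, -c]).det := by
    simp [Matrix.det_fin_two]; linear_combination -hl2
  have hl : μ + μ⁻¹ < l := Real.lt_sqrt (by positivity) |>.mpr h
  have hl0 : 0 ≤ l := Real.sqrt_nonneg _
  refine ⟨minimalNoncyclotomic_fin_two_symm hc (by rwa [abs_neg]) h₁ h₂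
    ((two_le_add_inv hμ).trans_lt (hl.trans_le (le_abs_self _))), ?_⟩
  rw [mahlerMeasure_fin_two h₁ h₂, sq]
  exact mul_lt_mul''
    (lt_mahlerMeasure_recipQuad hμ
      (by rwa [Complex.norm_real, Real.norm_eq_abs, abs_of_nonneg hl0]))
    (lt_mahlerMeasure_recipQuad hμ
      (by rwa [Complex.norm_real, Real.norm_eq_abs, abs_neg, abs_of_nonneg hl0]))
    hμ.le hμ.le

/-- three infinite families of 2×2 minimal noncyclotomic matrices, each of
Mahler measure greater than `1.722`. -/
theorem statement9 (a b : ℤ) :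
    ((1 ≤ |a| ∧ |b| ≤ 2) →
      MinimalNoncyclotomic !![2, a; a, b] ∧ (1.722 : ℝ) < mahlerMeasure !![2, a; a, b]) ∧
    ((2 ≤ |a| ∧ |b| ≤ 1) →
      MinimalNoncyclotomic !![1, a; a, b] ∧ (1.722 : ℝ) < mahlerMeasure !![1, a; a, b]) ∧
    (3 ≤ a →
      MinimalNoncyclotomic !![0, a; a, 0] ∧ (1.722 : ℝ) < mahlerMeasure !![0, a; a, 0]) := by
  refine ⟨fun ⟨ha, hb⟩ => ?_, fun ⟨ha, hb⟩ => ?_, fun ha => ?_⟩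
  · have ha' : (1 : ℝ) ≤ a ^ 2 := by exact_mod_cast one_le_sq_iff_one_le_abs a |>.mpr ha
    obtain ⟨hb₁, hb₂⟩ := abs_le.mp hb
    interval_cases b
    · exact (minimalNoncyclotomic_and_lt_mahlerMeasure_of_trace_eq_zero (μ := 3 / 2)
        (by norm_num) (by norm_num) (by norm_num; linarith)).imp_right (lt_trans (by norm_num))
    all_goals
      exact minimalNoncyclotomic_and_lt_mahlerMeasure_of_eval_neg
        (by norm_num) (by norm_num) (by norm_num) (by norm_num; linarith)
  · have ha' : (4 : ℝ) ≤ a ^ 2 := by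
      exact_mod_cast (show (4 : ℤ) ≤ a ^ 2 by nlinarith [sq_abs a])
    obtain ⟨hb₁, hb₂⟩ := abs_le.mp hb
    interval_cases b
    · exact (minimalNoncyclotomic_and_lt_mahlerMeasure_of_trace_eq_zero (μ := 3 / 2)
        (by norm_num) (by norm_num) (by norm_num; linarith)).imp_right (lt_trans (by norm_num))
    all_goals
      exact minimalNoncyclotomic_and_lt_mahlerMeasure_of_eval_neg
        (by norm_num) (by norm_num) (by norm_num) (by norm_num; linarith)
  · have ha' : (3 : ℝ) ≤ a := by exact_mod_cast ha
    exact minimalNoncyclotomic_and_lt_mahlerMeasure_of_eval_neg (by norm_num)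
      (by norm_num) (by norm_num) (by norm_num; nlinarith)

end
end

section
/- If A is a minimal noncyclotomic integer symmetric matrix having some entry of absolute value at least 3, then A has at most 2 rows. -/
/-
Every entry of an integer symmetric matrix is bounded in absolute value by its spectral radius:
over ℝ the ℓ²-operator norm of a symmetric matrix is its largest absolute eigenvalue, and it
dominates every entry. If `d ≥ 3` and `|A i j| ≥ 3`, deleting a row and column `k ∉ {i, j}`
keeps that entry, so the principal submatrix has spectral radius at least `3`, contradicting
minimality.
-/

open Polynomial Matrix

noncomputable section

open scoped Matrix.Norms.L2Operator

namespace Matrix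

variable {𝕜 n : Type*} [RCLike 𝕜] [Fintype n] [DecidableEq n]

lemma norm_apply_le_l2_opNorm (A : Matrix n n 𝕜) (i j : n) : ‖A i j‖ ≤ ‖A‖ :=
  calc ‖A i j‖ = ‖(EuclideanSpace.equiv n 𝕜).symm (A *ᵥ Pi.single j 1) i‖ := by
        rw [mulVec_single_one]; rfl
    _ ≤ ‖(EuclideanSpace.equiv n 𝕜).symm (A *ᵥ Pi.single j 1)‖ := PiLp.norm_apply_le _ _
    _ = ‖(EuclideanSpace.equiv n 𝕜).symm (A *ᵥ EuclideanSpace.single j (1 : 𝕜))‖ := rfl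
    _ ≤ ‖A‖ * ‖EuclideanSpace.single j (1 : 𝕜)‖ := A.l2_opNorm_mulVec _
    _ = ‖A‖ := by rw [PiLp.norm_single, norm_one, mul_one]

lemma IsHermitian.l2_opNorm_eq_norm_eigenvalues {A : Matrix n n 𝕜} (hA : A.IsHermitian) :
    ‖A‖ = ‖hA.eigenvalues‖ := by
  conv_lhs => rw [hA.spectral_theorem, Unitary.conjStarAlgAut_apply]
  rw [mul_assoc, CStarRing.norm_coe_unitary_mul,
    CStarRing.norm_mul_mem_unitary _ (Unitary.star_mem (SetLike.coe_mem _)), l2_opNorm_diagonal]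
  simp only [Pi.norm_def, Function.comp_apply, nnnorm_algebraMap']

end Matrix

variable {d : ℕ}

lemma abs_eigenvalues_le_specRad {M : Matrix (Fin d) (Fin d) ℤ}
    (hM : (M.map (Int.castRingHom ℝ)).IsHermitian) (k : Fin d) :
    |hM.eigenvalues k| ≤ specRad M := by
  have hroots : (M.charpoly.map (Int.castRingHom ℝ)).roots =
      Multiset.map hM.eigenvalues Finset.univ.val := by
    rw [← charpoly_map, hM.roots_charpoly_eq_eigenvalues]
    rfl
  have hfinite : {r : ℝ | ∃ x ∈ (M.charpoly.map (Int.castRingHom ℝ)).roots, |x| = r}.Finite := by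
    rw [hroots]
    exact (Set.finite_range fun k => |hM.eigenvalues k|).subset fun _ ⟨x, hx, hr⟩ => by
      obtain ⟨k, -, rfl⟩ := Multiset.mem_map.1 hx
      exact ⟨k, hr⟩
  exact le_csSup hfinite.bddAbove
    ⟨hM.eigenvalues k, hroots ▸ Multiset.mem_map_of_mem _ (Finset.mem_univ k), rfl⟩

lemma abs_apply_le_specRad {M : Matrix (Fin d) (Fin d) ℤ} (hM : M.IsSymm) (i j : Fin d) :
    (|M i j| : ℝ) ≤ specRad M := by
  have hN : (M.map (Int.castRingHom ℝ)).IsHermitian :=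
    isHermitian_iff_isSymm.2 (hM.map _)
  have hρ : ∀ k, |hN.eigenvalues k| ≤ specRad M := abs_eigenvalues_le_specRad hN
  calc (|M i j| : ℝ) = ‖M.map (Int.castRingHom ℝ) i j‖ := by simp
    _ ≤ ‖M.map (Int.castRingHom ℝ)‖ := norm_apply_le_l2_opNorm _ i j
    _ = ‖hN.eigenvalues‖ := hN.l2_opNorm_eq_norm_eigenvalues
    _ ≤ specRad M := (pi_norm_le_iff_of_nonneg ((abs_nonneg _).trans (hρ i))).2 hρ

lemma Matrix.IsSymm.deleteRC {A : Matrix (Fin d) (Fin d) ℤ} (hA : A.IsSymm) (k : Fin d) :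
    (deleteRC A k).IsSymm :=
  hA.submatrix _

lemma exists_deleteRC_apply_eq (A : Matrix (Fin d) (Fin d) ℤ) {i j k : Fin d} (hi : i ≠ k)
    (hj : j ≠ k) : ∃ i' j', deleteRC A k i' j' = A i j := by
  have e : d - 1 + 1 = d := Nat.succ_pred_eq_of_pos k.pos
  have hrange : ∀ x ≠ k, ∃ x', Fin.cast e ((Fin.cast e.symm k).succAbove x') = x := by
    intro x hx
    obtain ⟨x', hx'⟩ := Fin.exists_succAbove_eq ((Fin.cast_injective e.symm).ne hx)
    exact ⟨x', by rw [hx', Fin.cast_cast, Fin.cast_eq_self]⟩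
  obtain ⟨i', hi'⟩ := hrange i hi
  obtain ⟨j', hj'⟩ := hrange j hj
  exact ⟨i', j', by simp only [deleteRC, submatrix_apply, hi', hj']⟩

/-- a minimal noncyclotomic integer symmetric matrix with an entry of
absolute value at least 3 has at most 2 rows. -/
theorem statement10 (d : ℕ) (A : Matrix (Fin d) (Fin d) ℤ) (hA : A.IsSymm)
    (hmin : MinimalNoncyclotomic A) (h : ∃ i j, 3 ≤ |A i j|) : d ≤ 2 := by
  obtain ⟨i, j, hij⟩ := h
  by_contra! hd
  obtain ⟨k, hki, hkj⟩ : ∃ k, k ≠ i ∧ k ≠ j := Fin.exists_ne_and_ne_of_two_lt i j hd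
  obtain ⟨i', j', hentry⟩ := exists_deleteRC_apply_eq A hki.symm hkj.symm
  have hbound := abs_apply_le_specRad (hA.deleteRC k) i' j'
  rw [hentry] at hbound
  have h3 : (3 : ℝ) ≤ |(A i j : ℝ)| := by exact_mod_cast hij
  linarith [hmin.2 k]

end
end

section
/- If A is a minimal noncyclotomic integer symmetric matrix all of whose entries have absolute value at most 2, and at least one entry has absolute value exactly 2, then A has at most 3 rows. -/
open Polynomial Matrix

noncomputable section

/-!
For a real symmetric matrix `B`, the squared length of row `i` is `(B²)ᵢᵢ ≤ ρ(B)²`. If `d ≥ 4` and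
`|Aᵢⱼ| = 2`, deleting an index outside `{i, j, l}` leaves a cyclotomic matrix in which row `i` still
contains `Aᵢⱼ` and `Aᵢₗ`, so `Aᵢₗ = 0` for every `l ≠ j`; by symmetry row `j` is supported on
column `i` alone. An eigenvector `v` of `A` for an eigenvalue `μ` with `|μ| > 2` then satisfies
`μ² vᵢ = Aᵢⱼ Aⱼᵢ vᵢ = 4 vᵢ`, so `vᵢ = 0`, and `v` restricts to an eigenvector of the matrix with
row and column `i` deleted, contradicting `ρ ≤ 2` there.
-/

namespace Matrix

theorem mem_roots_charpoly_iff {K n : Type*} [Field K] [Fintype n] [DecidableEq n]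
    (A : Matrix n n K) (μ : K) : μ ∈ A.charpoly.roots ↔ ∃ v, v ≠ 0 ∧ A *ᵥ v = μ • v := by
  rw [mem_roots A.charpoly_monic.ne_zero, ← A.charpoly_toLin',
    ← Module.End.hasEigenvalue_iff_isRoot_charpoly]
  constructor
  · intro h
    obtain ⟨v, hv⟩ := h.exists_hasEigenvector
    exact ⟨v, hv.2, by simpa using hv.apply_eq_smul⟩
  · rintro ⟨v, hv0, hv⟩
    exact Module.End.hasEigenvalue_of_hasEigenvector ⟨by simpa using hv, hv0⟩

open RealInnerProductSpace in
theorem IsHermitian.sum_sq_apply_le {n : Type*} [Fintype n] [DecidableEq n]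
    {B : Matrix n n ℝ} (hB : B.IsHermitian) {r : ℝ} (hr : ∀ k, |hB.eigenvalues k| ≤ r)
    (i : n) : ∑ j, B i j ^ 2 ≤ r ^ 2 := by
  set b := hB.eigenvectorBasis
  set x : EuclideanSpace ℝ n := EuclideanSpace.single i 1
  set y : EuclideanSpace ℝ n := WithLp.toLp 2 (B *ᵥ x)
  have hcoeff : ∀ k, ⟪b k, y⟫ = hB.eigenvalues k * ⟪b k, x⟫ := by
    intro k
    simp only [EuclideanSpace.inner_eq_star_dotProduct, star_trivial, y]
    rw [dotProduct_comm, dotProduct_mulVec, ← mulVec_transpose,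
      ← conjTranspose_eq_transpose_of_trivial, hB.eq, hB.mulVec_eigenvectorBasis, dotProduct_comm]
    simp [b]
  have hx : ∑ k, ⟪b k, x⟫ ^ 2 = 1 := by
    simpa [Real.norm_eq_abs, sq_abs, x] using b.sum_sq_norm_inner_right x
  calc ∑ j, B i j ^ 2 = ‖y‖ ^ 2 := by
        simp [EuclideanSpace.norm_sq_eq, y, x, ← hB.apply i]
    _ = ∑ k, hB.eigenvalues k ^ 2 * ⟪b k, x⟫ ^ 2 := by
        simp_rw [← b.sum_sq_norm_inner_right y, hcoeff, Real.norm_eq_abs, sq_abs, mul_pow]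
    _ ≤ ∑ k, r ^ 2 * ⟪b k, x⟫ ^ 2 := by
        refine Finset.sum_le_sum fun k _ ↦ mul_le_mul_of_nonneg_right ?_ (sq_nonneg _)
        exact sq_le_sq' (abs_le.mp (hr k)).1 (abs_le.mp (hr k)).2
    _ = r ^ 2 := by rw [← Finset.mul_sum, hx, mul_one]

theorem submatrix_mulVec_comp_eq_smul {m n R : Type*} [Fintype m] [Fintype n]
    [CommSemiring R] {A : Matrix n n R} {v : n → R} {μ : R} {f : m → n}
    (hf : Function.Injective f) (hv : ∀ x ∉ Set.range f, v x = 0) (h : A *ᵥ v = μ • v) :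
    A.submatrix f f *ᵥ (v ∘ f) = μ • (v ∘ f) := by
  ext k
  rw [← Pi.smul_comp, ← h]
  exact Fintype.sum_of_injective f hf _ _ (fun x hx ↦ by simp [hv x hx]) fun _ ↦ rfl

theorem apply_eq_zero_of_mulVec_eq_smul {n R : Type*} [Fintype n] [CommRing R]
    [NoZeroDivisors R] {B : Matrix n n R} {i j : n} (hi : ∀ l ≠ j, B i l = 0)
    (hj : ∀ l ≠ i, B j l = 0) {μ : R} {v : n → R} (hv : B *ᵥ v = μ • v)
    (hμ : μ ^ 2 ≠ B i j * B j i) : v i = 0 := by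
  have row : ∀ p q, (∀ l ≠ q, B p l = 0) → μ * v p = B p q * v q := fun p q hp ↦ by
    rw [← smul_eq_mul, ← Pi.smul_apply, ← hv, mulVec, dotProduct,
      Finset.sum_eq_single q (fun l _ hl ↦ by rw [hp l hl, zero_mul]) (by simp)]
  have h : (μ ^ 2 - B i j * B j i) * v i = 0 := by
    linear_combination μ * row i j hi + B i j * row j i hj
  exact (mul_eq_zero.mp h).resolve_left (sub_ne_zero.mpr hμ)

end Matrix

section specRad

variable {n : ℕ} (M : Matrix (Fin n) (Fin n) ℤ)

theorem abs_le_specRad_of_mulVec_eq_smul {μ : ℝ} {v : Fin n → ℝ} (hv0 : v ≠ 0)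
    (hv : M.map (Int.castRingHom ℝ) *ᵥ v = μ • v) : |μ| ≤ specRad M := by
  have hμ : μ ∈ (M.charpoly.map (Int.castRingHom ℝ)).roots := by
    rw [← charpoly_map, mem_roots_charpoly_iff]
    exact ⟨v, hv0, hv⟩
  refine le_csSup ?_ ⟨μ, hμ, rfl⟩
  refine (((M.charpoly.map (Int.castRingHom ℝ)).roots.toFinset.finite_toSet.image
    (|·|)).bddAbove).mono ?_
  rintro _ ⟨x, hx, rfl⟩
  exact ⟨x, by simpa using hx, rfl⟩

theorem exists_mulVec_eq_smul_of_lt_specRad {r : ℝ} (hr : 0 ≤ r) (h : r < specRad M) :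
    ∃ μ : ℝ, ∃ v : Fin n → ℝ, v ≠ 0 ∧ M.map (Int.castRingHom ℝ) *ᵥ v = μ • v ∧ r < |μ| := by
  by_contra! hM
  refine h.not_ge (Real.sSup_le ?_ hr)
  rintro _ ⟨μ, hμ, rfl⟩
  rw [← charpoly_map, mem_roots_charpoly_iff] at hμ
  obtain ⟨v, hv0, hv⟩ := hμ
  exact hM μ v hv0 hv

theorem sum_sq_apply_le_sq_of_specRad_le (hM : M.IsSymm) {r : ℝ} (h : specRad M ≤ r)
    (i : Fin n) : ∑ j, (M i j : ℝ) ^ 2 ≤ r ^ 2 := by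
  have hH : (M.map (Int.castRingHom ℝ)).IsHermitian := by
    rw [IsHermitian, conjTranspose_eq_transpose_of_trivial, ← transpose_map, hM.eq]
  refine hH.sum_sq_apply_le (fun k ↦ le_trans ?_ h) i
  refine abs_le_specRad_of_mulVec_eq_smul M (v := ⇑(hH.eigenvectorBasis k)) ?_
    (hH.mulVec_eigenvectorBasis k)
  exact fun h0 ↦ hH.eigenvectorBasis.orthonormal.ne_zero k (PiLp.ext (congrFun h0))

end specRad

-- `n + 1 - 1` reduces to `n` and the casts in `deleteRC` to the identity.
theorem specRad_deleteRC {n : ℕ} (A : Matrix (Fin (n + 1)) (Fin (n + 1)) ℤ) (m : Fin (n + 1)) :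
    specRad (deleteRC A m) = specRad (A.submatrix m.succAbove m.succAbove) := rfl

section deletion

variable {n : ℕ} {A : Matrix (Fin (n + 1)) (Fin (n + 1)) ℤ}

theorem abs_le_specRad_submatrix_succAbove {i : Fin (n + 1)} {μ : ℝ} {v : Fin (n + 1) → ℝ}
    (hv0 : v ≠ 0) (hv : A.map (Int.castRingHom ℝ) *ᵥ v = μ • v) (hvi : v i = 0) :
    |μ| ≤ specRad (A.submatrix i.succAbove i.succAbove) := by
  have hv' : ∀ l ∉ Set.range i.succAbove, v l = 0 := by
    simp only [Fin.range_succAbove, Set.mem_compl_singleton_iff, not_not]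
    rintro _ rfl
    exact hvi
  refine abs_le_specRad_of_mulVec_eq_smul _ (v := v ∘ i.succAbove) ?_
    (submatrix_mulVec_comp_eq_smul Fin.succAbove_right_injective hv' hv)
  contrapose! hv0
  ext l
  by_cases hl : l = i
  · exact hl ▸ hvi
  · obtain ⟨k, rfl⟩ := Fin.exists_succAbove_eq hl
    exact congrFun hv0 k

theorem apply_eq_zero_of_abs_apply_eq_two (hA : A.IsSymm) (hn : 3 ≤ n)
    (hsub : ∀ m : Fin (n + 1), specRad (A.submatrix m.succAbove m.succAbove) ≤ 2)
    {p q l : Fin (n + 1)} (hpq : |A p q| = 2) (hlq : l ≠ q) : A p l = 0 := by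
  obtain ⟨m, hm⟩ : ∃ m, m ∉ ({p, q, l} : Finset (Fin (n + 1))) := by
    by_contra! h
    have := (Finset.card_le_card (s := Finset.univ) fun x _ ↦ h x).trans Finset.card_le_three
    rw [Finset.card_univ, Fintype.card_fin] at this
    omega
  simp only [Finset.mem_insert, Finset.mem_singleton, not_or] at hm
  obtain ⟨hmp, hmq, hml⟩ := hm
  obtain ⟨p', rfl⟩ := Fin.exists_succAbove_eq (Ne.symm hmp)
  obtain ⟨q', rfl⟩ := Fin.exists_succAbove_eq (Ne.symm hmq)
  obtain ⟨l', rfl⟩ := Fin.exists_succAbove_eq (Ne.symm hml)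
  have hrow := sum_sq_apply_le_sq_of_specRad_le _ (hA.submatrix _) (hsub m) p'
  have hpair := Finset.add_le_sum (f := fun k ↦ (A (m.succAbove p') (m.succAbove k) : ℝ) ^ 2)
    (fun k _ ↦ sq_nonneg _) (Finset.mem_univ q') (Finset.mem_univ l')
    (fun h ↦ hlq (congrArg _ h.symm))
  have hq : (A (m.succAbove p') (m.succAbove q') : ℝ) ^ 2 = 4 := by
    rw [← sq_abs, ← Int.cast_abs, hpq]; norm_num
  simp only [submatrix_apply] at hrow hpair
  have hl : (A (m.succAbove p') (m.succAbove l') : ℝ) ^ 2 ≤ 0 := by linarith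
  exact_mod_cast pow_eq_zero_iff two_ne_zero |>.mp (hl.antisymm (sq_nonneg _))

end deletion

theorem statement11_general (d : ℕ) (A : Matrix (Fin d) (Fin d) ℤ) (hA : A.IsSymm)
    (hmin : MinimalNoncyclotomic A)
    (h2 : ∃ i j, |A i j| = 2) : d ≤ 3 := by
  by_contra! hd
  obtain ⟨n, rfl⟩ : ∃ n, d = n + 1 := ⟨d - 1, by omega⟩
  obtain ⟨hρ, hsub⟩ := hmin
  simp only [specRad_deleteRC] at hsub
  obtain ⟨i, j, hij⟩ := h2
  have hji : |A j i| = 2 := by rwa [hA.apply]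
  obtain ⟨μ, v, hv0, hv, hμ⟩ := exists_mulVec_eq_smul_of_lt_specRad A zero_le_two hρ
  have hvi : v i = 0 := by
    refine apply_eq_zero_of_mulVec_eq_smul (j := j) ?_ ?_ hv ?_
    · exact fun l hl ↦ by simp [apply_eq_zero_of_abs_apply_eq_two hA (by omega) hsub hij hl]
    · exact fun l hl ↦ by simp [apply_eq_zero_of_abs_apply_eq_two hA (by omega) hsub hji hl]
    · have h4 : (A i j : ℝ) * A j i = 4 := by
        rw [hA.apply, ← sq, ← sq_abs, ← Int.cast_abs, hji]; norm_num
      rw [map_apply, map_apply, Int.coe_castRingHom, h4]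
      nlinarith [abs_mul_abs_self μ]
  linarith [abs_le_specRad_submatrix_succAbove hv0 hv hvi, hsub i]

/-- a minimal noncyclotomic integer symmetric matrix with all entries of
absolute value at most 2, and some entry of absolute value exactly 2, has at most 3 rows. -/
theorem statement11 (d : ℕ) (A : Matrix (Fin d) (Fin d) ℤ) (hA : A.IsSymm)
    (hmin : MinimalNoncyclotomic A)
    (hall : ∀ i j, |A i j| ≤ 2) (h2 : ∃ i j, |A i j| = 2) : d ≤ 3 :=
  statement11_general d A hA hmin h2

end
end

section
/- If A = (a_{ij}) is a minimal noncyclotomic integer symmetric matrix with all entries in {−1,0,1} and with at least 7 rows, then every vertex of the associated charged signed graph has degree at most 4; that is, for every index i, the number of indices j ≠ i with a_{ij} ≠ 0, plus 1 if a_{ii} ≠ 0, is at most 4. -/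
open Polynomial Matrix

noncomputable section

/-! If a vertex `i` had degree at least 5, delete a vertex `j ≠ i` such that row `i` keeps at
least five nonzero entries: a non-neighbour of `i` if there is one, and otherwise any vertex,
since then `i` has degree at least `d - 1 ≥ 6`. The resulting principal submatrix `B` is
cyclotomic, and for a real symmetric matrix with eigenvalues in `[-2, 2]` the diagonal entry
`(B²)ᵢᵢ = ∑ₖ Bᵢₖ²` is at most 4; for a `{-1, 0, 1}`-matrix this sum is the degree of `i`. -/

open Finset

theorem Matrix.IsHermitian.sum_sq_apply_le_s13 {n : Type*} [Fintype n] [DecidableEq n]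
    {B : Matrix n n ℝ} (hB : B.IsHermitian) {r : ℝ} (hr : ∀ k, |hB.eigenvalues k| ≤ r)
    (i : n) : ∑ k, B i k ^ 2 ≤ r ^ 2 := by
  set U : Matrix n n ℝ := (hB.eigenvectorUnitary : Matrix n n ℝ)
  have hUU : U * star U = 1 := Matrix.mem_unitaryGroup_iff.mp hB.eigenvectorUnitary.2
  have hsq : B * B = U * diagonal (fun k => hB.eigenvalues k ^ 2) * star U := by
    have hUU' : star U * U = 1 := Matrix.mem_unitaryGroup_iff'.mp hB.eigenvectorUnitary.2
    have hB' := hB.spectral_theorem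
    rw [Unitary.conjStarAlgAut_apply] at hB'
    conv_lhs => rw [hB']
    simp only [Matrix.mul_assoc]
    rw [← Matrix.mul_assoc (star U) U, hUU', Matrix.one_mul, ← Matrix.mul_assoc (diagonal _),
      diagonal_mul_diagonal]
    simp [U, sq]
  have hrow : ∑ k, U i k ^ 2 = 1 := by
    simpa [Matrix.mul_apply, sq] using congrFun (congrFun hUU i) i
  calc ∑ k, B i k ^ 2 = (B * B) i i := by
        simp only [Matrix.mul_apply, sq]
        congr! 2 with k
        simpa using hB.apply k i
    _ = ∑ k, hB.eigenvalues k ^ 2 * U i k ^ 2 := by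
        rw [hsq, Matrix.mul_apply]
        simp [Matrix.mul_diagonal, sq, mul_comm, mul_left_comm]
    _ ≤ ∑ k, r ^ 2 * U i k ^ 2 := by
        gcongr ∑ k, ?_ * _ with k
        exact sq_le_sq' (abs_le.mp (hr k)).1 (abs_le.mp (hr k)).2
    _ = r ^ 2 := by rw [← mul_sum, hrow, mul_one]

theorem abs_le_specRad {d : ℕ} (A : Matrix (Fin d) (Fin d) ℤ) {x : ℝ}
    (hx : x ∈ (A.charpoly.map (Int.castRingHom ℝ)).roots) : |x| ≤ specRad A := by
  refine le_csSup ?_ ⟨x, hx, rfl⟩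
  refine ((A.charpoly.map (Int.castRingHom ℝ)).roots.toFinset.image (|·|)).bddAbove.mono ?_
  rintro _ ⟨y, hy, rfl⟩
  exact mem_image_of_mem _ (Multiset.mem_toFinset.mpr hy)

theorem sum_sq_apply_le_four_of_specRad_le_two {d : ℕ} {A : Matrix (Fin d) (Fin d) ℤ}
    (hA : A.IsSymm) (hρ : specRad A ≤ 2) (i : Fin d) : ∑ k, A i k ^ 2 ≤ 4 := by
  have hH : (A.map (Int.castRingHom ℝ)).IsHermitian :=
    Matrix.isHermitian_iff_isSymm.mpr (hA.map _)
  have heig (k : Fin d) : |hH.eigenvalues k| ≤ 2 := by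
    refine (abs_le_specRad A ?_).trans hρ
    rw [← charpoly_map, hH.roots_charpoly_eq_eigenvalues]
    exact Multiset.mem_map_of_mem _ (mem_univ k)
  have := hH.sum_sq_apply_le_s13 heig i
  norm_num at this
  exact_mod_cast this

theorem deleteRC_eq_submatrix {m : ℕ} (A : Matrix (Fin (m + 1)) (Fin (m + 1)) ℤ)
    (j : Fin (m + 1)) : deleteRC A j = A.submatrix j.succAbove j.succAbove :=
  rfl

theorem sum_sq_eq_card_ne_zero {ι : Type*} [Fintype ι] {g : ι → ℤ}
    (hg : ∀ k, g k = -1 ∨ g k = 0 ∨ g k = 1) : ∑ k, g k ^ 2 = #{k | g k ≠ 0} := by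
  rw [card_filter, Nat.cast_sum]
  refine sum_congr rfl fun k _ => ?_
  rcases hg k with h | h | h <;> simp [h]

theorem card_filter_ne_add_ite {ι : Type*} [Fintype ι] [DecidableEq ι] (p : ι → Prop)
    [DecidablePred p] (i : ι) :
    #{j | j ≠ i ∧ p j} + (if p i then 1 else 0) = #{j | p j} := by
  have : ({j | j ≠ i ∧ p j} : Finset ι) = ({j | p j} : Finset ι).erase i := by
    ext j; simp
  split_ifs with hi
  · rw [this, card_erase_add_one (by simpa using hi)]
  · rw [this, erase_eq_of_notMem (by simpa using hi), add_zero]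

theorem exists_ne_add_sq_le_sum_sq {ι : Type*} [Fintype ι] {g : ι → ℤ}
    (hg : ∀ k, g k = -1 ∨ g k = 0 ∨ g k = 1) (i : ι) {c : ℕ} (hcard : c + 2 ≤ Fintype.card ι)
    (hc : c ≤ ∑ k, g k ^ 2) : ∃ j ≠ i, c + g j ^ 2 ≤ ∑ k, g k ^ 2 := by
  classical
  by_cases hzero : ∃ j ≠ i, g j = 0
  · obtain ⟨j, hji, hj⟩ := hzero
    exact ⟨j, hji, by simpa [hj] using hc⟩
  push Not at hzero
  obtain ⟨j, hji⟩ := Fintype.exists_ne_of_one_lt_card (by omega) i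
  refine ⟨j, hji, ?_⟩
  have hsupp : #(univ.erase i) ≤ #{k | g k ≠ 0} :=
    card_le_card fun k hk => by simpa using hzero k (ne_of_mem_erase hk)
  rw [card_erase_of_mem (mem_univ i), card_univ] at hsupp
  have hj1 : g j ^ 2 ≤ 1 := by rcases hg j with h | h | h <;> simp [h]
  rw [sum_sq_eq_card_ne_zero hg]
  omega

/-- a minimal noncyclotomic charged signed graph with at least 7 vertices
has all vertex degrees at most 4 (a charge counts 1 towards the degree). -/
theorem statement13 (d : ℕ) (A : Matrix (Fin d) (Fin d) ℤ) (hA : A.IsSymm)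
    (hent : ∀ i j, A i j = -1 ∨ A i j = 0 ∨ A i j = 1)
    (hmin : MinimalNoncyclotomic A) (hd : 7 ≤ d) :
    ∀ i : Fin d,
      (Finset.univ.filter (fun j => j ≠ i ∧ A i j ≠ 0)).card
        + (if A i i ≠ 0 then 1 else 0) ≤ 4 := by
  intro i
  obtain ⟨m, rfl⟩ : ∃ m, d = m + 1 := ⟨d - 1, by omega⟩
  have hdeg : ((#{j | j ≠ i ∧ A i j ≠ 0} + if A i i ≠ 0 then 1 else 0 : ℕ) : ℤ)
      = ∑ k, A i k ^ 2 := by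
    rw [card_filter_ne_add_ite, sum_sq_eq_card_ne_zero (hent i)]
  by_contra! hgt
  obtain ⟨j, hji, hj⟩ :=
    exists_ne_add_sq_le_sum_sq (hent i) i (c := 5) (by simpa using hd) (by omega)
  obtain ⟨i', rfl⟩ := Fin.exists_succAbove_eq hji.symm
  have hcyc := sum_sq_apply_le_four_of_specRad_le_two (hA.submatrix j.succAbove)
    (deleteRC_eq_submatrix A j ▸ hmin.2 j) i'
  rw [Fin.sum_univ_succAbove _ j] at hj
  simp only [submatrix_apply] at hcyc
  omega

end
end

section
/- Let G be a charged signed graph that is equivalent to a connected induced subgraph of one of T_{2k}, C_{2k}^{++}, C_{2k}^{+−} (for some k), and suppose the path rank of G is at least 5. Then G has a profile; the number of columns of any profile of G (the profile rank) equals the path rank of G; the partition of the vertex set of G into columns is uniquely determined; and the ordering of the columns is determined up to reversal and, for cycling profiles, cyclic permutation. -/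
open Polynomial Matrix

noncomputable section

/-- `A` is equivalent to an induced subgraph of some `T_{2k}` (`k ≥ 3`),
`C_{2k}^{++}` or `C_{2k}^{+-}` (`k ≥ 2`). -/
def EmbedsInTorC {V : Type*} [Fintype V] [DecidableEq V] (A : Matrix V V ℤ) : Prop :=
  ∃ k : ℕ,
    (∃ S : Finset (Fin (k + 3) × Fin 2), MEquiv A (induce (Tmat (k + 3)) S)) ∨
    (∃ S : Finset (Fin (k + 2) × Fin 2),
      MEquiv A (induce (Cmat (k + 2) 1 (-1)) S) ∨ MEquiv A (induce (Cmat (k + 2) (-1) 1) S))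

/-- `A` is equivalent to a *connected* induced subgraph of some `T_{2k}` (`k ≥ 3`),
`C_{2k}^{++}` or `C_{2k}^{+-}` (`k ≥ 2`). -/
def EquivConnSub {V : Type*} [Fintype V] [DecidableEq V] (A : Matrix V V ℤ) : Prop :=
  ∃ k : ℕ,
    (∃ S : Finset (Fin (k + 3) × Fin 2),
      Indecomposable (induce (Tmat (k + 3)) S) ∧ MEquiv A (induce (Tmat (k + 3)) S)) ∨
    (∃ S : Finset (Fin (k + 2) × Fin 2),
      (Indecomposable (induce (Cmat (k + 2) 1 (-1)) S) ∧
        MEquiv A (induce (Cmat (k + 2) 1 (-1)) S)) ∨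
      (Indecomposable (induce (Cmat (k + 2) (-1) 1) S) ∧
        MEquiv A (induce (Cmat (k + 2) (-1) 1) S)))


/-!
Vertices in a common column of a profile are twins: they have the same neighbours outside
themselves. Once there are at least five columns the converse holds as well, because any two
distinct vertices of a path or cycle with at least five vertices are told apart by a third one.
Hence the columns are the twin classes of the graph, which gives their uniqueness; a chordless
path or cycle meets every column at most once and a transversal of the columns is one, which
gives profile rank = path rank. The induced map on column indices preserves consecutiveness,
so it moves along a walk with constant step `±1` in `ℤ/k`, i.e. it is a rotation or a
reflection, and it fixes or reverses the ends when the first profile is not cycling.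

For existence, a connected induced subgraph of `T_{2k}` either meets every column, and the
columns of `T_{2k}` form a cycling profile, or it misses a column, after which the remaining
columns form a path; in `C_{2k}^{±±}` the columns always form a path. Connectedness makes the
occupied columns an interval, and an equivalence of matrices preserves the zero pattern and
the charges up to a global sign.
-/

open Function

def Consec (cyc : Bool) (k : ℕ) (x y : Fin k) : Prop :=
  if cyc then ((x : ℕ) + 1) % k = y ∨ ((y : ℕ) + 1) % k = x
  else (x : ℕ) + 1 = y ∨ (y : ℕ) + 1 = x

/-- A profile without the bound `3 ≤ k` for non-cycling profiles: that bound only follows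
a posteriori, from the path rank. -/
structure IsWeakProfile {V : Type*} (A : Matrix V V ℤ) (k : ℕ) (cyc : Bool) (c : V → Fin k) :
    Prop where
  three_le : cyc = true → 3 ≤ k
  surjective : Surjective c
  charge_eq : ∀ u v, c u = c v → A u u = A v v
  ne_zero_iff : ∀ u v, u ≠ v → (A u v ≠ 0 ↔ Consec cyc k (c u) (c v) ∨ (c u = c v ∧ A u u ≠ 0))

def IsTwin {V : Type*} (r : V → V → Prop) (u v : V) : Prop :=
  ∀ w, w ≠ u → w ≠ v → (r u w ↔ r v w)

lemma IsProfile.isWeakProfile {V : Type*} {A : Matrix V V ℤ} {k : ℕ} {cyc : Bool} {c : V → Fin k}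
    (h : IsProfile A k cyc c) : IsWeakProfile A k cyc c :=
  ⟨fun _ => h.1, h.2.1, h.2.2.1, h.2.2.2⟩

lemma IsWeakProfile.isProfile {V : Type*} {A : Matrix V V ℤ} {k : ℕ} {cyc : Bool}
    {c : V → Fin k} (h : IsWeakProfile A k cyc c) (hk : 3 ≤ k) : IsProfile A k cyc c :=
  ⟨hk, h.surjective, h.charge_eq, h.ne_zero_iff⟩

lemma Nat.add_one_mod_eq_iff {k a b : ℕ} (ha : a < k) :
    (a + 1) % k = b ↔ (a + 1 < k ∧ b = a + 1) ∨ (a + 1 = k ∧ b = 0) := by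
  rcases (Nat.succ_le_of_lt ha).lt_or_eq with h | h
  · rw [Nat.mod_eq_of_lt h]; omega
  · rw [show a + 1 = k from h, Nat.mod_self]; omega

theorem exists_eq_add_mul_of_unit_step {R : Type*} [CommRing R] (ψ : ℕ → R) (m : ℕ)
    (hstep : ∀ n, n + 1 < m → ψ (n + 1) = ψ n + 1 ∨ ψ (n + 1) = ψ n - 1)
    (hinj : ∀ n, n + 2 < m → ψ (n + 2) ≠ ψ n) :
    ∃ s : R, (s = 1 ∨ s = -1) ∧ ∀ n < m, ψ n = ψ 0 + s * n := by
  rcases lt_or_ge m 2 with hm | hm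
  · refine ⟨1, Or.inl rfl, fun n hn => ?_⟩
    obtain rfl : n = 0 := by omega
    simp
  obtain ⟨s, hs, hs₁⟩ : ∃ s : R, (s = 1 ∨ s = -1) ∧ ψ 1 = ψ 0 + s := by
    rcases hstep 0 (by omega) with h | h
    exacts [⟨1, Or.inl rfl, h⟩, ⟨-1, Or.inr rfl, by rw [h]; ring⟩]
  -- the step never changes sign, since `ψ` never returns to its value two steps back
  have hsucc : ∀ n, n + 1 < m → ψ (n + 1) = ψ n + s := by
    intro n hn
    induction n with
    | zero => simpa using hs₁
    | succ n ih =>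
      have hprev := ih (by omega)
      have hne := hinj n hn
      rcases hstep (n + 1) hn with h | h <;> rcases hs with rfl | rfl
      · exact h
      · exact absurd (show ψ (n + 2) = ψ n by rw [h, hprev]; ring) hne
      · exact absurd (show ψ (n + 2) = ψ n by rw [h, hprev]; ring) hne
      · rw [h]; ring
  refine ⟨s, hs, fun n hn => ?_⟩
  induction n with
  | zero => simp
  | succ n ih => rw [hsucc n hn, ih (by omega)]; push_cast; ring

namespace Consec

variable {cyc cyc₁ cyc₂ : Bool} {k : ℕ}

lemma iff_val (x y : Fin k) :
    Consec cyc k x y ↔ ((x : ℕ) + 1 = y ∨ (y : ℕ) + 1 = x) ∨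
      (cyc = true ∧ ((x : ℕ) + 1 = k ∧ (y : ℕ) = 0 ∨ (y : ℕ) + 1 = k ∧ (x : ℕ) = 0)) := by
  cases cyc
  · simp [Consec]
  · simp only [Consec, if_true, Nat.add_one_mod_eq_iff x.isLt, Nat.add_one_mod_eq_iff y.isLt,
      true_and]
    omega

lemma irrefl (hk : cyc = true → 3 ≤ k) (x : Fin k) : ¬ Consec cyc k x x := by
  rw [iff_val]
  cases cyc
  · simp
  · have := hk rfl
    simp only [true_and]
    omega

lemma symm {x y : Fin k} (h : Consec cyc k x y) : Consec cyc k y x := by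
  rw [iff_val] at h ⊢; tauto

lemma cyclic {x y : Fin k} (h : Consec cyc k x y) : Consec true k x y := by
  rw [iff_val] at h ⊢; simp only [true_and]; tauto

lemma eq_of_isTwin (hk : 5 ≤ k) {a b : Fin k} (h : IsTwin (Consec cyc k) a b) : a = b := by
  have ha := a.isLt; have hb := b.isLt
  -- `a ± 1`, `b ± 1` and the two ends, clamped into range, already separate `a` from `b`
  let clamp (m : ℕ) : Fin k := ⟨min m (k - 1), by omega⟩
  have key := fun m => h (clamp m)
  have h₁ := key (a + 1); have h₂ := key (a - 1); have h₃ := key (b + 1); have h₄ := key (b - 1)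
  have h₅ := key 0; have h₆ := key (k - 1)
  simp only [ne_eq, Fin.ext_iff, iff_val, clamp] at h₁ h₂ h₃ h₄ h₅ h₆ ⊢
  cases cyc <;>
    simp only [Bool.false_eq_true, false_and, or_false, true_and] at h₁ h₂ h₃ h₄ h₅ h₆ <;> omega

section FinRing

open Fin.NatCast Fin.CommRing

variable [NeZero k]

lemma true_iff_eq_add_one (x y : Fin k) : Consec true k x y ↔ y = x + 1 ∨ x = y + 1 := by
  simp only [Consec, if_true, Fin.ext_iff, Fin.val_add, Fin.val_one', Nat.add_mod_mod]
  tauto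

lemma _root_.Fin.val_neg_one_of_neZero : ((-1 : Fin k) : ℕ) = k - 1 := by
  obtain ⟨m, rfl⟩ := Nat.exists_eq_succ_of_ne_zero (NeZero.ne k)
  simp

lemma _root_.Fin.val_neg_one_sub (x : Fin k) : ((-1 - x : Fin k) : ℕ) = k - 1 - x := by
  have := x.isLt
  rw [Fin.val_sub, Fin.val_neg_one_of_neZero,
    show k - x + (k - 1) = (k - 1 - x) + k by omega, Nat.add_mod_right, Nat.mod_eq_of_lt (by omega)]

lemma true_iff_rotate {g x y : Fin k} (hx : x ≠ g) (hy : y ≠ g) :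
    Consec true k x y ↔ Consec false k (x - g - 1) (y - g - 1) := by
  have hrot : Consec true k x y ↔ Consec true k (x - g - 1) (y - g - 1) := by
    simp only [true_iff_eq_add_one]
    constructor <;> rintro (h | h) <;> [left; right; left; right] <;> linear_combination h
  have hx' : x - g - 1 ≠ -1 := fun h => hx (by linear_combination h)
  have hy' : y - g - 1 ≠ -1 := fun h => hy (by linear_combination h)
  rw [ne_eq, Fin.ext_iff, Fin.val_neg_one_of_neZero] at hx' hy'
  rw [hrot, iff_val, iff_val]
  have := (x - g - 1).isLt; have := (y - g - 1).isLt
  simp only [true_and, Bool.false_eq_true, false_and, or_false]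
  omega

lemma exists_eq_add_mul {φ : Fin k → Fin k} (hφ : Injective φ)
    (h : ∀ x y, Consec cyc₁ k x y → Consec cyc₂ k (φ x) (φ y)) :
    ∃ s : Fin k, (s = 1 ∨ s = -1) ∧ ∀ x, φ x = φ 0 + s * x := by
  have hval : ∀ n < k, ((n : Fin k) : ℕ) = n := fun n hn => Fin.val_cast_of_lt hn
  have hstep : ∀ n, n + 1 < k → φ (n + 1 : ℕ) = φ n + 1 ∨ φ (n + 1 : ℕ) = φ n - 1 := by
    intro n hn
    have hc := (h n ((n + 1 : ℕ) : Fin k)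
      (by rw [iff_val, hval n (by omega), hval (n + 1) hn]; omega)).cyclic
    rw [true_iff_eq_add_one] at hc
    rcases hc with hc | hc
    exacts [Or.inl hc, Or.inr (eq_sub_of_add_eq hc.symm)]
  have hinj : ∀ n, n + 2 < k → φ (n + 2 : ℕ) ≠ φ n := by
    intro n hn heq
    have := congrArg Fin.val (hφ heq)
    rw [hval n (by omega), hval (n + 2) hn] at this
    omega
  obtain ⟨s, hs, hψ⟩ := exists_eq_add_mul_of_unit_step (fun n : ℕ => φ n) k hstep hinj
  exact ⟨s, hs, fun x => by simpa using hψ x x.isLt⟩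

/-- In the non-cycling case the ends `0` and `-1` are not consecutive, but their images are
consecutive in `ℤ/k`; this forces the images to be the two ends of the second profile. -/
lemma map_zero_of_false (hk : 3 ≤ k) {φ : Fin k → Fin k}
    (h : ∀ x y, Consec false k x y ↔ Consec cyc₂ k (φ x) (φ y)) {s : Fin k}
    (hs : s = 1 ∨ s = -1) (hφs : ∀ x, φ x = φ 0 + s * x) :
    (φ 0 = 0 ∧ s = 1) ∨ (φ 0 = -1 ∧ s = -1) := by
  have hlast : φ (-1) = φ 0 - s := by rw [hφs]; ring
  have hend : ¬ Consec cyc₂ k (φ 0) (φ (-1)) := by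
    rw [← h, iff_val, Fin.val_zero, Fin.val_neg_one_of_neZero]
    simp only [Bool.false_eq_true, false_and, or_false]
    omega
  have hcyc : Consec true k (φ 0) (φ (-1)) := by
    rw [true_iff_eq_add_one, hlast]
    rcases hs with rfl | rfl
    exacts [Or.inr (by ring), Or.inl (by ring)]
  obtain rfl : cyc₂ = false := by
    cases cyc₂
    · rfl
    · exact absurd hcyc hend
  have h2 : (2 : Fin k) ≠ 0 := by
    simp [Fin.ext_iff, Nat.mod_eq_of_lt (show 2 < k by omega)]
  rw [iff_val] at hend hcyc
  have hv₀ := (φ 0).isLt; have hv₁ := (φ (-1)).isLt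
  have : (φ 0 = 0 ∧ φ (-1) = -1) ∨ (φ 0 = -1 ∧ φ (-1) = 0) := by
    simp only [Fin.ext_iff, Fin.val_neg_one_of_neZero, Fin.val_zero]; omega
  rcases this with ⟨h₀, h₁⟩ | ⟨h₀, h₁⟩ <;> rcases hs with rfl | rfl
  · exact Or.inl ⟨h₀, rfl⟩
  · rw [h₀, h₁] at hlast
    exact absurd (by linear_combination -hlast) h2
  · rw [h₀, h₁] at hlast
    exact absurd (by linear_combination hlast) h2
  · exact Or.inr ⟨h₀, rfl⟩

theorem exists_eq_add (hk : 3 ≤ k) {φ : Fin k → Fin k} (hφ : Injective φ)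
    (h : ∀ x y, Consec cyc₁ k x y ↔ Consec cyc₂ k (φ x) (φ y)) :
    ∃ t : Fin k, (cyc₁ = true ∨ t = 0) ∧ ((∀ x, φ x = x + t) ∨ ∀ x, φ x = -1 - x + t) := by
  obtain ⟨s, hs, hφs⟩ := exists_eq_add_mul hφ fun x y => (h x y).1
  cases cyc₁
  · rcases map_zero_of_false hk h hs hφs with ⟨h₀, rfl⟩ | ⟨h₀, rfl⟩
    · exact ⟨0, Or.inr rfl, Or.inl fun x => by rw [hφs, h₀]; ring⟩
    · exact ⟨0, Or.inr rfl, Or.inr fun x => by rw [hφs, h₀]; ring⟩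
  · rcases hs with rfl | rfl
    · exact ⟨φ 0, Or.inl rfl, Or.inl fun x => by rw [hφs]; ring⟩
    · exact ⟨φ 0 + 1, Or.inl rfl, Or.inr fun x => by rw [hφs]; ring⟩

end FinRing

end Consec

section Chordless

variable {V : Type*} {G : SimpleGraph V}

lemma hasChordless_iff {n : ℕ} :
    HasChordless G n ↔ ∃ cyc : Bool, (cyc = true → 3 ≤ n) ∧
      ∃ f : Fin n → V, Injective f ∧ ∀ i j, G.Adj (f i) (f j) ↔ Consec cyc n i j := by
  constructor
  · rintro (⟨f, hf, hadj⟩ | ⟨h3, f, hf, hadj⟩)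
    exacts [⟨false, nofun, f, hf, hadj⟩, ⟨true, fun _ => h3, f, hf, hadj⟩]
  · rintro ⟨_ | _, h3, f, hf, hadj⟩
    exacts [Or.inl ⟨f, hf, hadj⟩, Or.inr ⟨h3 rfl, f, hf, hadj⟩]

lemma HasChordless.le_card [Fintype V] {n : ℕ} (h : HasChordless G n) : n ≤ Fintype.card V := by
  obtain ⟨-, -, f, hf, -⟩ := hasChordless_iff.1 h
  simpa using Fintype.card_le_of_injective f hf

lemma hasChordless_pathRank [Fintype V] : HasChordless G (pathRank G) :=
  Nat.sSup_mem ⟨0, Or.inl ⟨Fin.elim0, fun i => i.elim0, fun i => i.elim0⟩⟩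
    ⟨_, fun _ => HasChordless.le_card⟩

lemma HasChordless.le_pathRank [Fintype V] {n : ℕ} (h : HasChordless G n) : n ≤ pathRank G :=
  le_csSup ⟨_, fun _ => HasChordless.le_card⟩ h

lemma injective_comp_of_chordless {β : Type*} {g : V → β}
    (hg : ∀ u v, g u = g v → IsTwin G.Adj u v) {n : ℕ} (hn : 5 ≤ n) {cyc : Bool}
    {f : Fin n → V} (hf : Injective f) (hadj : ∀ i j, G.Adj (f i) (f j) ↔ Consec cyc n i j) :
    Injective (g ∘ f) := by
  intro i j hij
  refine Consec.eq_of_isTwin (cyc := cyc) hn fun l hli hlj => ?_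
  rw [← hadj, ← hadj]
  exact hg _ _ hij (f l) (hf.ne hli) (hf.ne hlj)

end Chordless

namespace IsWeakProfile

variable {V : Type*} {A : Matrix V V ℤ} {k : ℕ} {cyc cyc₁ cyc₂ : Bool} {c c₁ c₂ : V → Fin k}

lemma adj_iff (hc : IsWeakProfile A k cyc c) {u v : V} (huv : u ≠ v) :
    (graphOf A).Adj u v ↔ Consec cyc k (c u) (c v) ∨ (c u = c v ∧ A u u ≠ 0) := by
  rw [graphOf, SimpleGraph.fromRel_adj, hc.ne_zero_iff u v huv, hc.ne_zero_iff v u huv.symm]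
  constructor
  · rintro ⟨-, h | h | ⟨hvu, hv⟩⟩
    · exact h
    · exact Or.inl h.symm
    · exact Or.inr ⟨hvu.symm, by rwa [hc.charge_eq u v hvu.symm]⟩
  · exact fun h => ⟨huv, Or.inl h⟩

lemma isTwin (hc : IsWeakProfile A k cyc c) {u v : V} (h : c u = c v) :
    IsTwin (graphOf A).Adj u v := fun w hwu hwv => by
  rw [hc.adj_iff hwu.symm, hc.adj_iff hwv.symm, h, hc.charge_eq u v h]

lemma isTwin_iff (hc : IsWeakProfile A k cyc c) (hk : 5 ≤ k) {u v : V} :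
    IsTwin (graphOf A).Adj u v ↔ c u = c v := by
  refine ⟨fun h => Consec.eq_of_isTwin (cyc := cyc) hk fun t htu htv => ?_, hc.isTwin⟩
  obtain ⟨w, rfl⟩ := hc.surjective t
  have hwu : w ≠ u := fun h => htu (congrArg c h)
  have hwv : w ≠ v := fun h => htv (congrArg c h)
  have := h w hwu hwv
  rwa [hc.adj_iff hwu.symm, hc.adj_iff hwv.symm, or_iff_left (fun h => htu (h.1.symm)),
    or_iff_left (fun h => htv (h.1.symm))] at this

lemma hasChordless (hc : IsWeakProfile A k cyc c) : HasChordless (graphOf A) k := by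
  have hinv := rightInverse_surjInv hc.surjective
  refine hasChordless_iff.2 ⟨cyc, hc.three_le, surjInv hc.surjective, hinv.injective,
    fun i j => ?_⟩
  rcases eq_or_ne i j with rfl | hij
  · exact iff_of_false (SimpleGraph.irrefl _) (Consec.irrefl hc.three_le i)
  · rw [hc.adj_iff (hinv.injective.ne hij), hinv i, hinv j, or_iff_left (fun h => hij h.1)]

lemma le_of_hasChordless (hc : IsWeakProfile A k cyc c) {n : ℕ} (h : HasChordless (graphOf A) n)
    (hn : 5 ≤ n) : n ≤ k := by
  obtain ⟨_, -, f, hf, hadj⟩ := hasChordless_iff.1 h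
  simpa using Fintype.card_le_of_injective _
    (injective_comp_of_chordless (fun _ _ => hc.isTwin) hn hf hadj)

lemma pathRank_eq [Fintype V] (hc : IsWeakProfile A k cyc c) (h5 : 5 ≤ pathRank (graphOf A)) :
    pathRank (graphOf A) = k :=
  (hc.le_of_hasChordless hasChordless_pathRank h5).antisymm hc.hasChordless.le_pathRank

lemma exists_comp (h₁ : IsWeakProfile A k cyc₁ c₁) (h₂ : IsWeakProfile A k cyc₂ c₂)
    (hcol : ∀ u v, c₁ u = c₁ v ↔ c₂ u = c₂ v) :
    ∃ φ : Fin k → Fin k, Injective φ ∧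
      (∀ x y, Consec cyc₁ k x y ↔ Consec cyc₂ k (φ x) (φ y)) ∧ ∀ v, c₂ v = φ (c₁ v) := by
  set g := surjInv h₁.surjective
  have hg : ∀ x, c₁ (g x) = x := rightInverse_surjInv h₁.surjective
  have hφ : Injective (c₂ ∘ g) := fun x y h => by simpa [hg] using (hcol _ _).2 h
  refine ⟨c₂ ∘ g, hφ, fun x y => ?_, fun v => (hcol _ _).1 (hg _).symm⟩
  rcases eq_or_ne x y with rfl | hxy
  · exact iff_of_false (Consec.irrefl h₁.three_le x) (Consec.irrefl h₂.three_le _)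
  have huv : g x ≠ g y := fun h => hxy (by simpa [hg] using congrArg c₁ h)
  have h₁' := h₁.ne_zero_iff _ _ huv
  have h₂' := h₂.ne_zero_iff _ _ huv
  rw [hg, hg, or_iff_left (fun h => hxy h.1)] at h₁'
  rw [or_iff_left (fun h => hφ.ne hxy h.1)] at h₂'
  exact h₁'.symm.trans h₂'

theorem unique (h₁ : IsWeakProfile A k cyc₁ c₁) (h₂ : IsWeakProfile A k cyc₂ c₂) (hk : 5 ≤ k) :
    (∀ u v, c₁ u = c₁ v ↔ c₂ u = c₂ v) ∧
      ∃ t : ℕ, (cyc₁ = true ∨ t % k = 0) ∧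
        ((∀ v, (c₂ v : ℕ) = ((c₁ v : ℕ) + t) % k) ∨
         (∀ v, (c₂ v : ℕ) = ((k - 1 - (c₁ v : ℕ)) + t) % k)) := by
  have hcol : ∀ u v, c₁ u = c₁ v ↔ c₂ u = c₂ v := fun u v =>
    (h₁.isTwin_iff hk).symm.trans (h₂.isTwin_iff hk)
  obtain ⟨φ, hφ, hcons, hc₂⟩ := h₁.exists_comp h₂ hcol
  have : NeZero k := ⟨by omega⟩
  obtain ⟨t, ht, hφt⟩ := Consec.exists_eq_add (by omega) hφ hcons
  refine ⟨hcol, t, ht.imp_right fun h => by simp [h], hφt.imp (fun h v => ?_) (fun h v => ?_)⟩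
  · rw [hc₂, h, Fin.val_add]
  · rw [hc₂, h, Fin.val_add, Fin.val_neg_one_sub]

end IsWeakProfile

lemma Int.exists_eq_single_of_sum_mul_self_eq_one {ι : Type*} [Fintype ι] [DecidableEq ι]
    {f : ι → ℤ} (h : ∑ i, f i * f i = 1) : ∃ i, f i * f i = 1 ∧ ∀ j, j ≠ i → f j = 0 := by
  obtain ⟨i, hi⟩ : ∃ i, f i ≠ 0 := by
    by_contra! h0
    simp [h0] at h
  have hsplit := Finset.add_sum_erase Finset.univ (fun j => f j * f j) (Finset.mem_univ i)
  have hnn : ∀ j ∈ Finset.univ.erase i, 0 ≤ f j * f j := fun j _ => mul_self_nonneg (f j)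
  have hpos : 0 < f i * f i := mul_self_pos.2 hi
  have hrest : ∑ j ∈ Finset.univ.erase i, f j * f j = 0 :=
    le_antisymm (by rw [h] at hsplit; omega) (Finset.sum_nonneg hnn)
  refine ⟨i, by rw [h] at hsplit; omega, fun j hj => mul_self_eq_zero.1 ?_⟩
  exact (Finset.sum_eq_zero_iff_of_nonneg hnn).1 hrest j
    (Finset.mem_erase.2 ⟨hj, Finset.mem_univ j⟩)

lemma Matrix.exists_equiv_of_orthogonal {V W : Type*} [Fintype V] [DecidableEq V] [Fintype W]
    [DecidableEq W] {P : Matrix V W ℤ} (h₁ : Pᵀ * P = 1) (h₂ : P * Pᵀ = 1) :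
    ∃ e : W ≃ V, ∀ w, P (e w) w * P (e w) w = 1 ∧ ∀ v, v ≠ e w → P v w = 0 := by
  have hcol : ∀ w, ∑ v, P v w * P v w = 1 := fun w => by
    simpa [Matrix.mul_apply] using congrFun (congrFun h₁ w) w
  have hrow : ∀ v, ∑ w, P v w * P v w = 1 := fun v => by
    simpa [Matrix.mul_apply] using congrFun (congrFun h₂ v) v
  choose F hF using fun w => Int.exists_eq_single_of_sum_mul_self_eq_one (hcol w)
  choose G hG using fun v => Int.exists_eq_single_of_sum_mul_self_eq_one (hrow v)
  have hFG : ∀ v w, P v w ≠ 0 → v = F w ∧ w = G v := fun v w h =>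
    ⟨by_contra fun hv => h ((hF w).2 v hv), by_contra fun hw => h ((hG v).2 w hw)⟩
  refine ⟨⟨F, G, fun w => ?_, fun v => ?_⟩, hF⟩
  · exact (hFG _ _ (left_ne_zero_of_mul_eq_one (hF w).1)).2.symm
  · exact (hFG _ _ (left_ne_zero_of_mul_eq_one (hG v).1)).1.symm

lemma MEquiv.exists_equiv {V W : Type*} [Fintype V] [DecidableEq V] [Fintype W] [DecidableEq W]
    {A : Matrix V V ℤ} {B : Matrix W W ℤ} (h : MEquiv A B) :
    ∃ e : V ≃ W, (∀ u v, A u v = 0 ↔ B (e u) (e v) = 0) ∧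
      ∀ u v, A u u = A v v ↔ B (e u) (e u) = B (e v) (e v) := by
  obtain ⟨ε, P, hε, h₁, h₂, rfl⟩ := h
  obtain ⟨e, he⟩ := Matrix.exists_equiv_of_orthogonal h₁ h₂
  have hentry : ∀ x y, (ε • (Pᵀ * A * P)) x y = ε * (P (e x) x * P (e y) y) * A (e x) (e y) := by
    intro x y
    rw [Matrix.smul_apply, Matrix.mul_apply,
      Finset.sum_eq_single (e y) (fun v _ hv => by rw [(he y).2 v hv, mul_zero]) (by simp),
      Matrix.mul_apply,
      Finset.sum_eq_single (e x) (fun v _ hv => by rw [Matrix.transpose_apply, (he x).2 v hv,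
        zero_mul]) (by simp), Matrix.transpose_apply, smul_eq_mul]
    ring
  have hε0 : ε ≠ 0 := by rcases hε with rfl | rfl <;> decide
  refine ⟨e.symm, fun u v => ?_, fun u v => ?_⟩ <;>
    obtain ⟨x, rfl⟩ := e.surjective u <;> obtain ⟨y, rfl⟩ := e.surjective v <;>
    simp only [Equiv.symm_apply_apply, hentry, (he _).1, mul_one]
  · simp [hε0, left_ne_zero_of_mul_eq_one (he x).1, left_ne_zero_of_mul_eq_one (he y).1]
  · exact (mul_right_injective₀ hε0).eq_iff.symm

lemma IsWeakProfile.of_mequiv {V W : Type*} [Fintype V] [DecidableEq V] [Fintype W]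
    [DecidableEq W] {A : Matrix V V ℤ} {B : Matrix W W ℤ} (h : MEquiv A B) {k : ℕ} {cyc : Bool}
    {c : W → Fin k} (hc : IsWeakProfile B k cyc c) :
    ∃ c' : V → Fin k, IsWeakProfile A k cyc c' := by
  obtain ⟨e, hzero, hcharge⟩ := h.exists_equiv
  refine ⟨c ∘ e, hc.three_le, hc.surjective.comp e.surjective,
    fun u v huv => (hcharge u v).2 (hc.charge_eq _ _ huv), fun u v huv => ?_⟩
  simp only [ne_eq, hzero, Function.comp_apply]
  exact hc.ne_zero_iff _ _ (e.injective.ne huv)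

lemma SimpleGraph.Connected.exists_eq_of_le {W : Type*} {G : SimpleGraph W} (hG : G.Connected)
    {n : W → ℕ} (hn : ∀ x y, G.Adj x y → n y ≤ n x + 1) {a b : W} {t : ℕ} (ha : n a ≤ t)
    (hb : t ≤ n b) : ∃ z, n z = t := by
  by_contra! hne
  obtain ⟨d, -, hd₁, hd₂⟩ := (hG.preconnected a b).some.exists_boundary_dart {x | n x ≤ t} ha
    (by simpa using lt_of_le_of_ne hb (hne b).symm)
  have := hn _ _ d.adj
  have := hne d.fst
  simp only [Set.mem_ofPred_eq, not_le] at hd₁ hd₂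
  omega

/-- Connectedness makes the image of the column coordinate `n` an interval. -/
theorem exists_isWeakProfile_of_coord {W : Type*} [Fintype W] {B : Matrix W W ℤ}
    (hB : Indecomposable B) (n : W → ℕ) (hcharge : ∀ x y, n x = n y → B x x = B y y)
    (hadj : ∀ x y, x ≠ y →
      (B x y ≠ 0 ↔ (n x + 1 = n y ∨ n y + 1 = n x) ∨ (n x = n y ∧ B x x ≠ 0))) :
    ∃ m c, IsWeakProfile B m false c := by
  have : Nonempty W := hB.nonempty
  obtain ⟨a, -, ha⟩ := Finset.univ.exists_min_image n Finset.univ_nonempty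
  obtain ⟨b, -, hb⟩ := Finset.univ.exists_max_image n Finset.univ_nonempty
  have hstep : ∀ x y, (graphOf B).Adj x y → n y ≤ n x + 1 := by
    intro x y hxy
    obtain ⟨hne, h | h⟩ := hxy
    · have := (hadj x y hne).1 h; omega
    · have := (hadj y x hne.symm).1 h; omega
  have hlo := fun x => ha x (Finset.mem_univ x)
  have hhi := fun x => hb x (Finset.mem_univ x)
  refine ⟨n b - n a + 1, fun x => ⟨n x - n a, by grind⟩, nofun, fun t => ?_, fun x y hxy => ?_,
    fun x y hxy => ?_⟩
  · obtain ⟨z, hz⟩ := hB.exists_eq_of_le hstep (le_add_right le_rfl)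
      (show n a + t ≤ n b by have := t.isLt; have := hlo b; omega)
    exact ⟨z, Fin.ext (by simp only; omega)⟩
  · apply hcharge
    have := congrArg Fin.val hxy
    grind
  · rw [hadj x y hxy, Consec.iff_val, Fin.ext_iff]
    have := hlo x; have := hlo y
    simp only [Bool.false_eq_true, false_and, or_false]
    omega

lemma Tmat_ne_zero_iff {k : ℕ} (hk : 3 ≤ k) (u v : Fin k × Fin 2) :
    Tmat k u v ≠ 0 ↔ Consec true k u.1 v.1 := by
  have := u.1.isLt; have := v.1.isLt
  simp only [Tmat, Consec, Matrix.of_apply, if_true, Nat.add_one_mod_eq_iff u.1.isLt,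
    Nat.add_one_mod_eq_iff v.1.isLt]
  split_ifs <;> simp <;> omega

/-- Rotating a column `g` missed by `S` to the end turns cyclic adjacency into linear
adjacency. -/
theorem exists_isWeakProfile_induce_Tmat {k : ℕ} (hk : 3 ≤ k) {S : Finset (Fin k × Fin 2)}
    (hS : Indecomposable (induce (Tmat k) S)) :
    ∃ m cyc c, IsWeakProfile (induce (Tmat k) S) m cyc c := by
  have : NeZero k := ⟨by omega⟩
  have hdiag : ∀ x : S, induce (Tmat k) S x x = 0 := fun x =>
    not_not.1 fun h => Consec.irrefl (fun _ => hk) _ ((Tmat_ne_zero_iff hk _ _).1 h)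
  by_cases hfull : Surjective fun x : S => x.1.1
  · refine ⟨k, true, _, ⟨fun _ => hk, hfull, fun x y _ => by rw [hdiag, hdiag], fun x y _ => ?_⟩⟩
    rw [hdiag, induce, Matrix.submatrix_apply, Tmat_ne_zero_iff hk]
    simp
  · obtain ⟨g, hg⟩ := not_forall.1 hfull
    have hg' : ∀ x : S, x.1.1 ≠ g := fun x h => hg ⟨x, h⟩
    obtain ⟨m, c, hc⟩ := exists_isWeakProfile_of_coord hS (fun x => (x.1.1 - g - 1 : Fin k))
      (fun x y _ => by rw [hdiag, hdiag]) (fun x y _ => by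
        rw [hdiag, induce, Matrix.submatrix_apply, Tmat_ne_zero_iff hk,
          Consec.true_iff_rotate (hg' x) (hg' y)]
        simp [Consec])
    exact ⟨m, false, c, hc⟩

lemma Cmat_ne_zero_iff {k : ℕ} {ch es : ℤ} (hch : ch ≠ 0) (hes : es ≠ 0) (u v : Fin k × Fin 2) :
    Cmat k ch es u v ≠ 0 ↔ ((u.1 : ℕ) + 1 = v.1 ∨ (v.1 : ℕ) + 1 = u.1) ∨
      (u.1 = v.1 ∧ ((u.1 : ℕ) = 0 ∨ (u.1 : ℕ) = k - 1)) := by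
  simp only [Cmat, Matrix.of_apply, Fin.ext_iff]
  split_ifs <;> simp_all

theorem exists_isWeakProfile_induce_Cmat {k : ℕ} {ch es : ℤ} (hch : ch ≠ 0) (hes : es ≠ 0)
    {S : Finset (Fin k × Fin 2)} (hS : Indecomposable (induce (Cmat k ch es) S)) :
    ∃ m c, IsWeakProfile (induce (Cmat k ch es) S) m false c :=
  exists_isWeakProfile_of_coord hS (fun x => x.1.1)
    (fun x y h => by simp [induce, Cmat, Fin.ext h])
    (fun x y _ => by
      simp only [induce, Matrix.submatrix_apply, Cmat_ne_zero_iff hch hes, Fin.ext_iff,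
        true_and]
      omega)

theorem EquivConnSub.exists_isWeakProfile {V : Type*} [Fintype V] [DecidableEq V]
    {A : Matrix V V ℤ} (h : EquivConnSub A) : ∃ k cyc c, IsWeakProfile A k cyc c := by
  obtain ⟨k, ⟨S, hS, hA⟩ | ⟨S, ⟨hS, hA⟩ | ⟨hS, hA⟩⟩⟩ := h
  · obtain ⟨m, cyc, c, hc⟩ := exists_isWeakProfile_induce_Tmat (by omega) hS
    exact ⟨m, cyc, hc.of_mequiv hA⟩
  · obtain ⟨m, c, hc⟩ := exists_isWeakProfile_induce_Cmat one_ne_zero (by norm_num) hS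
    exact ⟨m, false, hc.of_mequiv hA⟩
  · obtain ⟨m, c, hc⟩ := exists_isWeakProfile_induce_Cmat (by norm_num) one_ne_zero hS
    exact ⟨m, false, hc.of_mequiv hA⟩

theorem statement15_general (n : ℕ) (A : Matrix (Fin n) (Fin n) ℤ)
    (hequiv : EquivConnSub A)
    (hrank : 5 ≤ pathRank (graphOf A)) :
    (∃ (k : ℕ) (cyc : Bool) (c : Fin n → Fin k), IsProfile A k cyc c) ∧
    (∀ (k : ℕ) (cyc : Bool) (c : Fin n → Fin k),
      IsProfile A k cyc c → k = pathRank (graphOf A)) ∧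
    (∀ (k₁ k₂ : ℕ) (cyc₁ cyc₂ : Bool) (c₁ : Fin n → Fin k₁) (c₂ : Fin n → Fin k₂),
      IsProfile A k₁ cyc₁ c₁ → IsProfile A k₂ cyc₂ c₂ →
      k₁ = k₂ ∧
      (∀ u v : Fin n, c₁ u = c₁ v ↔ c₂ u = c₂ v) ∧
      ∃ t : ℕ, (cyc₁ = true ∨ t % k₁ = 0) ∧
        ((∀ v : Fin n, (c₂ v : ℕ) = ((c₁ v : ℕ) + t) % k₁) ∨
         (∀ v : Fin n, (c₂ v : ℕ) = ((k₁ - 1 - (c₁ v : ℕ)) + t) % k₁))) := by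
  obtain ⟨k, cyc, c, hc⟩ := hequiv.exists_isWeakProfile
  have hk := hc.pathRank_eq hrank
  refine ⟨⟨k, cyc, c, hc.isProfile (by omega)⟩,
    fun k' cyc' c' h => (h.isWeakProfile.pathRank_eq hrank).symm, ?_⟩
  intro k₁ k₂ cyc₁ cyc₂ c₁ c₂ h₁ h₂
  have hk₁ := h₁.isWeakProfile.pathRank_eq hrank
  obtain rfl : k₁ = k₂ := hk₁.symm.trans (h₂.isWeakProfile.pathRank_eq hrank)
  exact ⟨rfl, h₁.isWeakProfile.unique h₂.isWeakProfile (hk₁ ▸ hrank)⟩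

/-- a charged signed graph equivalent to a connected induced subgraph of
some `T_{2k}`, `C_{2k}^{++}` or `C_{2k}^{+-}` and of path rank at least 5 has a profile;
the number of columns of any profile equals the path rank, the partition into columns is
uniquely determined, and the ordering of the columns is determined up to reversal and
(for cycling profiles) cyclic permutation. -/
theorem statement15 (n : ℕ) (A : Matrix (Fin n) (Fin n) ℤ)
    (hA : A.IsSymm) (hent : ∀ i j, A i j = -1 ∨ A i j = 0 ∨ A i j = 1)
    (hequiv : EquivConnSub A)
    (hrank : 5 ≤ pathRank (graphOf A)) :
    (∃ (k : ℕ) (cyc : Bool) (c : Fin n → Fin k), IsProfile A k cyc c) ∧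
    (∀ (k : ℕ) (cyc : Bool) (c : Fin n → Fin k),
      IsProfile A k cyc c → k = pathRank (graphOf A)) ∧
    (∀ (k₁ k₂ : ℕ) (cyc₁ cyc₂ : Bool) (c₁ : Fin n → Fin k₁) (c₂ : Fin n → Fin k₂),
      IsProfile A k₁ cyc₁ c₁ → IsProfile A k₂ cyc₂ c₂ →
      k₁ = k₂ ∧
      (∀ u v : Fin n, c₁ u = c₁ v ↔ c₂ u = c₂ v) ∧
      ∃ t : ℕ, (cyc₁ = true ∨ t % k₁ = 0) ∧
        ((∀ v : Fin n, (c₂ v : ℕ) = ((c₁ v : ℕ) + t) % k₁) ∨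
         (∀ v : Fin n, (c₂ v : ℕ) = ((k₁ - 1 - (c₁ v : ℕ)) + t) % k₁))) :=
  statement15_general n A hequiv hrank

end
end
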